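/- arXiv:2004.11672 — 12 statements merged into one kernel-verified Lean document; each statement's English description precedes it below -/
import Mathlib

section
/- Let K and L be positive integers with L ≤ K and let T > 0. Let a_0, …, a_{L−1} be nonnegative real numbers and ψ_0, …, ψ_{L−1} arbitrary real numbers. Define the phase slopes α_l = 2πl/(KT) for l = 0, …, L−1. Then Σ_{k=0}^{K−1} |Σ_{l=0}^{L−1} a_l · exp(−i(ψ_l − α_l·k·T))|² = K · Σ_{l=0}^{L−1} a_l². In particular, the value is independent of ψ, so the infimum over all ψ ∈ ℝ^L of the left-hand side equals K·Σ_{l=0}^{L−1} a_l², i.e., the phase slopes α_l = 2πl/(KT) achieve the lower bound of Theorem 1. -/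
/-!
With `ζ = exp(2πi/K)`, the `k`-th combined sample is `Σ_l c_l ζ^{lk}` where `c_l = a_l e^{-iψ_l}`,
i.e. a discrete Fourier transform of `(c_l)` padded to length `K`. Since the exponents
`0, …, L - 1` are distinct modulo `K`, the powers `k ↦ ζ^{lk}` are orthogonal, and Parseval's
identity gives `K Σ_l |c_l|² = K Σ_l a_l²`, whatever the phases `ψ_l` are.
-/

open Complex ComplexConjugate Finset

theorem IsPrimitiveRoot.sum_zpow_pow {R : Type*} [Field R] {ζ : R} {K : ℕ}
    (hζ : IsPrimitiveRoot ζ K) (d : ℤ) :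
    ∑ k ∈ range K, (ζ ^ d) ^ k = if (K : ℤ) ∣ d then (K : R) else 0 := by
  split_ifs with hd
  · simp [(hζ.zpow_eq_one_iff_dvd d).mpr hd]
  · have hne : ζ ^ d ≠ 1 := mt (hζ.zpow_eq_one_iff_dvd d).mp hd
    have hpow : (ζ ^ d) ^ K = 1 := by
      rw [← zpow_natCast, ← zpow_mul, mul_comm, zpow_mul, zpow_natCast, hζ.pow_eq_one, one_zpow]
    rw [geom_sum_eq hne, hpow, sub_self, zero_div]

theorem IsPrimitiveRoot.sum_pow_mul_conj_pow_pow {ζ : ℂ} {K : ℕ} (hζ : IsPrimitiveRoot ζ K)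
    {l m : ℕ} (hl : l < K) (hm : m < K) :
    ∑ k ∈ range K, (ζ ^ l * conj (ζ ^ m)) ^ k = if l = m then (K : ℂ) else 0 := by
  have hK : K ≠ 0 := by omega
  rw [map_pow, ← inv_eq_conj (hζ.norm'_eq_one hK), ← zpow_natCast, ← zpow_natCast, inv_zpow',
    ← zpow_add₀ (hζ.ne_zero hK), hζ.sum_zpow_pow]
  refine if_congr ⟨fun hdvd => ?_, fun hlm => by simp [hlm]⟩ rfl rfl
  have := Int.eq_zero_of_abs_lt_dvd hdvd (abs_lt.mpr ⟨by omega, by omega⟩)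
  omega

theorem IsPrimitiveRoot.sum_norm_sq_sum_mul_pow {ζ : ℂ} {K L : ℕ} (hζ : IsPrimitiveRoot ζ K)
    (hLK : L ≤ K) (c : Fin L → ℂ) :
    ∑ k ∈ range K, ‖∑ l : Fin L, c l * (ζ ^ (l : ℕ)) ^ k‖ ^ 2 = K * ∑ l, ‖c l‖ ^ 2 := by
  have hortho (l m : Fin L) :
      ∑ k ∈ range K, (ζ ^ (l : ℕ) * conj (ζ ^ (m : ℕ))) ^ k = if l = m then (K : ℂ) else 0 := by
    simp only [hζ.sum_pow_mul_conj_pow_pow (by omega : (l : ℕ) < K) (by omega : (m : ℕ) < K),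
      Fin.val_inj]
  apply ofReal_injective
  push_cast
  simp_rw [← mul_conj', map_sum, map_mul, map_pow, sum_mul_sum]
  calc _ = ∑ i, ∑ j, c i * conj (c j) *
          ∑ k ∈ range K, (ζ ^ (i : ℕ) * conj (ζ ^ (j : ℕ))) ^ k := by
        rw [sum_comm]; refine sum_congr rfl fun i _ => ?_
        rw [sum_comm]; refine sum_congr rfl fun j _ => ?_
        rw [mul_sum]; refine sum_congr rfl fun k _ => ?_
        rw [map_pow]; ring
    _ = _ := by
        simp only [hortho, mul_ite, mul_zero, sum_ite_eq, mem_univ, if_true, mul_comm (K : ℂ),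
          sum_mul]

theorem ofReal_mul_exp_linear_phase {K : ℕ} {T : ℝ} (hT : T ≠ 0) (a ψ : ℝ) (l k : ℕ) :
    (a : ℂ) * exp (-I * ((ψ - 2 * Real.pi * l / (K * T) * k * T : ℝ) : ℂ))
      = a * exp (-I * ψ) * (exp (2 * Real.pi * I / K) ^ l) ^ k := by
  have hT' : (T : ℂ) ≠ 0 := ofReal_ne_zero.mpr hT
  rw [← exp_nat_mul, ← exp_nat_mul, mul_assoc (a : ℂ), ← exp_add]
  congr 2
  push_cast
  field_simp
  ring

theorem stmt0_general (K L : ℕ) (hK : 0 < K) (hLK : L ≤ K)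
    (T : ℝ) (hT : 0 < T)
    (a : Fin L → ℝ) :
    (∀ ψ : Fin L → ℝ,
      ∑ k ∈ Finset.range K,
        ‖∑ l : Fin L, (a l : ℂ) *
          Complex.exp (-Complex.I *
            ((ψ l - (2 * Real.pi * l / (K * T)) * k * T : ℝ) : ℂ))‖ ^ 2
        = K * ∑ l : Fin L, (a l) ^ 2) ∧
    sInf (Set.range (fun ψ : Fin L → ℝ =>
      ∑ k ∈ Finset.range K,
        ‖∑ l : Fin L, (a l : ℂ) *
          Complex.exp (-Complex.I *
            ((ψ l - (2 * Real.pi * l / (K * T)) * k * T : ℝ) : ℂ))‖ ^ 2))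
      = K * ∑ l : Fin L, (a l) ^ 2 := by
  have hζ := Complex.isPrimitiveRoot_exp K hK.ne'
  have key (ψ : Fin L → ℝ) :
      ∑ k ∈ Finset.range K,
        ‖∑ l : Fin L, (a l : ℂ) *
          Complex.exp (-Complex.I *
            ((ψ l - (2 * Real.pi * l / (K * T)) * k * T : ℝ) : ℂ))‖ ^ 2
        = K * ∑ l : Fin L, (a l) ^ 2 := by
    simp_rw [ofReal_mul_exp_linear_phase hT.ne', hζ.sum_norm_sq_sum_mul_pow hLK]
    simp [Complex.norm_exp]
  refine ⟨key, ?_⟩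
  simp only [key, Set.range_const, csInf_singleton]

/-- With phase slopes `α_l = 2πl/(KT)`, the per-port objective
`Σ_{k<K} |Σ_{l<L} a_l exp(−i(ψ_l − α_l k T))|²` equals `K Σ_l a_l²` for every
phase vector `ψ`; in particular its infimum over all `ψ ∈ ℝ^L` equals `K Σ_l a_l²`. -/
theorem stmt0 (K L : ℕ) (hK : 0 < K) (hL : 0 < L) (hLK : L ≤ K)
    (T : ℝ) (hT : 0 < T)
    (a : Fin L → ℝ) (ha : ∀ l, 0 ≤ a l) :
    (∀ ψ : Fin L → ℝ,
      ∑ k ∈ Finset.range K,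
        ‖∑ l : Fin L, (a l : ℂ) *
          Complex.exp (-Complex.I *
            ((ψ l - (2 * Real.pi * l / (K * T)) * k * T : ℝ) : ℂ))‖ ^ 2
        = K * ∑ l : Fin L, (a l) ^ 2) ∧
    sInf (Set.range (fun ψ : Fin L → ℝ =>
      ∑ k ∈ Finset.range K,
        ‖∑ l : Fin L, (a l : ℂ) *
          Complex.exp (-Complex.I *
            ((ψ l - (2 * Real.pi * l / (K * T)) * k * T : ℝ) : ℂ))‖ ^ 2))
      = K * ∑ l : Fin L, (a l) ^ 2 :=
  stmt0_general K L hK hLK T hT a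
end

section
/- Let K and L be positive integers with L ≤ K and L ≤ 3, and let T > 0. Let a_0, …, a_{L−1} be nonnegative real numbers. Then for every vector of phase slopes α = (α_0, …, α_{L−1}) ∈ ℝ^L, the infimum over ψ = (ψ_0, …, ψ_{L−1}) ∈ ℝ^L of Σ_{k=0}^{K−1} |Σ_{l=0}^{L−1} a_l · exp(−i(ψ_l − α_l·k·T))|² is at most K · Σ_{l=0}^{L−1} a_l². Consequently (combined with achievability by α_l = 2πl/(KT)), sup over α ∈ ℝ^L of inf over ψ ∈ ℝ^L of this quantity equals exactly K · Σ_{l=0}^{L−1} a_l². -/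
/-!
With the steering vectors `s_l = (exp (i α_l k T))_k ∈ ℂ^K`, of squared norm `K`, the objective
is `‖∑ l, a_l e^{-iψ_l} • s_l‖²`. Choosing `ψ_l ∈ {0, π}` one antenna at a time, with the sign
given by the parallelogram law, keeps it below `∑ l, a_l² ‖s_l‖² = K ∑ a_l²`. For the slopes
`α_l = 2πl/(KT)` the `s_l` are distinct columns of the `K`-point DFT matrix, hence orthogonal when
`L ≤ K`, and Pythagoras makes the objective equal to `K ∑ a_l²` whatever `ψ` is.
-/

open Complex Finset
open scoped InnerProductSpace

section SignChoice

variable {ι E : Type*} [NormedAddCommGroup E]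

lemma exists_sign_norm_add_smul_sq_le (𝕜 : Type*) [RCLike 𝕜] [InnerProductSpace 𝕜 E] (v w : E) :
    ∃ δ : ℤˣ, ‖v + δ • w‖ ^ 2 ≤ ‖v‖ ^ 2 + ‖w‖ ^ 2 := by
  have hpar := parallelogram_law_with_norm 𝕜 v w
  by_cases h : ‖v + w‖ ^ 2 ≤ ‖v‖ ^ 2 + ‖w‖ ^ 2
  · exact ⟨1, by simpa using h⟩
  · exact ⟨-1, by rw [Units.neg_smul, one_smul, ← sub_eq_add_neg]; linarith⟩

lemma exists_signs_norm_sum_smul_sq_le (𝕜 : Type*) [RCLike 𝕜] [InnerProductSpace 𝕜 E]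
    (s : Finset ι) (w : ι → E) :
    ∃ ε : ι → ℤˣ, ‖∑ i ∈ s, ε i • w i‖ ^ 2 ≤ ∑ i ∈ s, ‖w i‖ ^ 2 := by
  classical
  induction s using Finset.induction_on with
  | empty => exact ⟨1, by simp⟩
  | insert j s hj ih =>
    obtain ⟨ε, hε⟩ := ih
    obtain ⟨δ, hδ⟩ := exists_sign_norm_add_smul_sq_le 𝕜 (∑ i ∈ s, ε i • w i) (w j)
    have hs : ∑ i ∈ s, Function.update ε j δ i • w i = ∑ i ∈ s, ε i • w i :=
      sum_congr rfl fun i hi => by rw [Function.update_of_ne (ne_of_mem_of_not_mem hi hj)]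
    refine ⟨Function.update ε j δ, ?_⟩
    rw [sum_insert hj, sum_insert hj, hs, Function.update_self, add_comm]
    linarith

end SignChoice

section Pythagoras

variable {𝕜 ι E : Type*} [RCLike 𝕜] [NormedAddCommGroup E] [InnerProductSpace 𝕜 E]

lemma norm_sum_smul_sq_of_pairwise_inner_eq_zero {v : ι → E}
    (hv : Pairwise fun i j => ⟪v i, v j⟫_𝕜 = 0) (c : ι → 𝕜) (s : Finset ι) :
    ‖∑ i ∈ s, c i • v i‖ ^ 2 = ∑ i ∈ s, ‖c i‖ ^ 2 * ‖v i‖ ^ 2 := by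
  classical
  induction s using Finset.induction_on with
  | empty => simp
  | insert j s hj ih =>
    have horth : ⟪c j • v j, ∑ i ∈ s, c i • v i⟫_𝕜 = 0 := by
      rw [inner_sum]
      refine sum_eq_zero fun i hi => ?_
      rw [inner_smul_left, inner_smul_right, hv (ne_of_mem_of_not_mem hi hj).symm]
      simp
    rw [sum_insert hj, sum_insert hj, ← ih, sq, sq,
      norm_add_sq_eq_norm_sq_add_norm_sq_of_inner_eq_zero _ _ horth, norm_smul]
    ring

end Pythagoras

lemma exists_phases_norm_sum_smul_sq_le {ι E : Type*} [Fintype ι] [NormedAddCommGroup E]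
    [InnerProductSpace ℂ E] (a : ι → ℝ) (v : ι → E) :
    ∃ ψ : ι → ℝ, ‖∑ i, ((a i : ℂ) * exp (-I * ψ i)) • v i‖ ^ 2 ≤ ∑ i, a i ^ 2 * ‖v i‖ ^ 2 := by
  obtain ⟨ε, hε⟩ := exists_signs_norm_sum_smul_sq_le ℂ univ fun i => (a i : ℂ) • v i
  refine ⟨fun i => if ε i = 1 then 0 else Real.pi, ?_⟩
  have hphase : ∀ i, ((a i : ℂ) * exp (-I * (if ε i = 1 then 0 else Real.pi : ℝ))) • v i
      = ε i • (a i : ℂ) • v i := by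
    intro i
    rcases Int.units_eq_one_or (ε i) with h | h <;>
      simp [h, mul_comm I, exp_neg, exp_pi_mul_I, Units.neg_smul]
  simp only [hphase]
  simpa [norm_smul, mul_pow] using hε

lemma IsPrimitiveRoot.sum_range_conj_pow_mul_pow_eq_zero {ζ : ℂ} {K : ℕ} (hζ : IsPrimitiveRoot ζ K)
    {l m : ℕ} (hlm : l < m) (hm : m < K) :
    ∑ k ∈ range K, (starRingEnd ℂ) ((ζ ^ l) ^ k) * (ζ ^ m) ^ k = 0 := by
  have hζl : (starRingEnd ℂ) (ζ ^ l) * ζ ^ l = 1 := by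
    rw [conj_mul', norm_pow, hζ.norm'_eq_one (by omega)]
    simp
  have hterm : ∀ k, (starRingEnd ℂ) ((ζ ^ l) ^ k) * (ζ ^ m) ^ k = (ζ ^ (m - l)) ^ k := by
    intro k
    rw [map_pow, ← mul_pow, ← Nat.add_sub_of_le hlm.le, pow_add, ← mul_assoc, hζl, one_mul,
      Nat.add_sub_cancel_left]
  have hne : ζ ^ (m - l) ≠ 1 := hζ.pow_ne_one_of_pos_of_lt (by omega) (by omega)
  rw [sum_congr rfl fun k _ => hterm k, geom_sum_eq hne, pow_right_comm, hζ.pow_eq_one, one_pow,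
    sub_self, zero_div]

noncomputable def steeringVector (K : ℕ) (T θ : ℝ) : EuclideanSpace ℂ (Fin K) :=
  WithLp.toLp 2 fun k => exp (I * (θ * k * T : ℝ))

section Steering

variable {K : ℕ} {T : ℝ}

lemma norm_steeringVector_sq (θ : ℝ) : ‖steeringVector K T θ‖ ^ 2 = K := by
  simp only [steeringVector, EuclideanSpace.norm_sq_eq, mul_comm I, norm_exp_ofReal_mul_I]
  simp

lemma sum_range_norm_sq_eq_norm_sum_smul_steeringVector_sq {L : ℕ} (a α ψ : Fin L → ℝ) :
    ∑ k ∈ range K, ‖∑ l : Fin L, (a l : ℂ) * exp (-I * ((ψ l - α l * k * T : ℝ) : ℂ))‖ ^ 2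
      = ‖∑ l, ((a l : ℂ) * exp (-I * ψ l)) • steeringVector K T (α l)‖ ^ 2 := by
  rw [EuclideanSpace.norm_sq_eq, ← Fin.sum_univ_eq_sum_range]
  refine sum_congr rfl fun k _ => ?_
  simp only [WithLp.ofLp_sum, WithLp.ofLp_smul, steeringVector, Finset.sum_apply, Pi.smul_apply,
    smul_eq_mul]
  congr 2
  refine sum_congr rfl fun l _ => ?_
  rw [mul_assoc (a l : ℂ), ← exp_add]
  push_cast
  ring_nf

lemma steeringVector_dft_apply (hT : T ≠ 0) (l : ℕ) (k : Fin K) :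
    steeringVector K T (2 * Real.pi * l / (K * T)) k =
      (exp (2 * Real.pi * I / K) ^ l) ^ (k : ℕ) := by
  have hK : (K : ℂ) ≠ 0 := Nat.cast_ne_zero.mpr (Fin.pos k).ne'
  rw [← pow_mul, ← exp_nat_mul]
  simp only [steeringVector, WithLp.ofLp_toLp]
  congr 1
  have hT' : (T : ℂ) ≠ 0 := ofReal_ne_zero.mpr hT
  push_cast
  field_simp

lemma inner_steeringVector_dft_eq_zero (hT : T ≠ 0) {l m : ℕ} (hl : l < K) (hm : m < K)
    (hlm : l ≠ m) :
    ⟪steeringVector K T (2 * Real.pi * l / (K * T)),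
      steeringVector K T (2 * Real.pi * m / (K * T))⟫_ℂ = 0 := by
  wlog h : l < m generalizing l m
  · rw [inner_eq_zero_symm]
    exact this hm hl hlm.symm (by omega)
  simp only [PiLp.inner_apply, steeringVector_dft_apply hT, RCLike.inner_apply']
  rw [Fin.sum_univ_eq_sum_range (fun k => (starRingEnd ℂ) ((exp (2 * Real.pi * I / K) ^ l) ^ k) *
    (exp (2 * Real.pi * I / K) ^ m) ^ k) K]
  exact (isPrimitiveRoot_exp K (by omega)).sum_range_conj_pow_mul_pow_eq_zero h hm

lemma norm_sum_smul_steeringVector_dft_sq (hT : T ≠ 0) {L : ℕ} (hLK : L ≤ K) (c : Fin L → ℂ) :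
    ‖∑ l, c l • steeringVector K T (2 * Real.pi * l / (K * T))‖ ^ 2 = K * ∑ l, ‖c l‖ ^ 2 := by
  rw [norm_sum_smul_sq_of_pairwise_inner_eq_zero fun l m hlm =>
    inner_steeringVector_dft_eq_zero hT (by omega) (by omega) (Fin.val_ne_of_ne hlm)]
  simp [norm_steeringVector_sq, mul_comm, mul_sum]

end Steering

theorem stmt1_general (K L : ℕ) (hLK : L ≤ K)
    (T : ℝ) (hT : 0 < T)
    (a : Fin L → ℝ) :
    (∀ α : Fin L → ℝ,
      sInf (Set.range (fun ψ : Fin L → ℝ =>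
        ∑ k ∈ Finset.range K,
          ‖∑ l : Fin L, (a l : ℂ) *
            Complex.exp (-Complex.I * ((ψ l - α l * k * T : ℝ) : ℂ))‖ ^ 2))
        ≤ K * ∑ l : Fin L, (a l) ^ 2) ∧
    sSup (Set.range (fun α : Fin L → ℝ =>
      sInf (Set.range (fun ψ : Fin L → ℝ =>
        ∑ k ∈ Finset.range K,
          ‖∑ l : Fin L, (a l : ℂ) *
            Complex.exp (-Complex.I * ((ψ l - α l * k * T : ℝ) : ℂ))‖ ^ 2))))
      = K * ∑ l : Fin L, (a l) ^ 2 := by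
  simp only [sum_range_norm_sq_eq_norm_sum_smul_steeringVector_sq]
  have hbdd : ∀ α : Fin L → ℝ, BddBelow (Set.range fun ψ : Fin L → ℝ =>
      ‖∑ l, ((a l : ℂ) * exp (-I * ψ l)) • steeringVector K T (α l)‖ ^ 2) :=
    fun α => ⟨0, by rintro _ ⟨ψ, rfl⟩; positivity⟩
  have hupper : ∀ α : Fin L → ℝ, sInf (Set.range fun ψ : Fin L → ℝ =>
      ‖∑ l, ((a l : ℂ) * exp (-I * ψ l)) • steeringVector K T (α l)‖ ^ 2)
        ≤ K * ∑ l, a l ^ 2 := by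
    intro α
    obtain ⟨ψ, hψ⟩ := exists_phases_norm_sum_smul_sq_le a fun l => steeringVector K T (α l)
    refine (csInf_le (hbdd α) ⟨ψ, rfl⟩).trans (hψ.trans_eq ?_)
    simp [norm_steeringVector_sq, mul_comm, mul_sum]
  have hdft : ∀ ψ : Fin L → ℝ, ‖∑ l, ((a l : ℂ) * exp (-I * ψ l)) •
      steeringVector K T (2 * Real.pi * l / (K * T))‖ ^ 2 = K * ∑ l, a l ^ 2 := by
    intro ψ
    rw [norm_sum_smul_steeringVector_dft_sq hT.ne' hLK]
    simp [norm_exp]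
  refine ⟨hupper, IsGreatest.csSup_eq ⟨⟨fun l => 2 * Real.pi * l / (K * T), ?_⟩, ?_⟩⟩
  · simp only [hdft, Set.range_const, csInf_singleton]
  · rintro _ ⟨α, rfl⟩
    exact hupper α

/-- For `L ≤ K`, `L ≤ 3`, every phase-slope vector `α ∈ ℝ^L` has
worst-case (over `ψ`) objective at most `K Σ_l a_l²`; consequently the
sup over `α` of the inf over `ψ` of the objective equals exactly `K Σ_l a_l²`. -/
theorem stmt1 (K L : ℕ) (hK : 0 < K) (hL : 0 < L) (hLK : L ≤ K) (hL3 : L ≤ 3)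
    (T : ℝ) (hT : 0 < T)
    (a : Fin L → ℝ) (ha : ∀ l, 0 ≤ a l) :
    (∀ α : Fin L → ℝ,
      sInf (Set.range (fun ψ : Fin L → ℝ =>
        ∑ k ∈ Finset.range K,
          ‖∑ l : Fin L, (a l : ℂ) *
            Complex.exp (-Complex.I * ((ψ l - α l * k * T : ℝ) : ℂ))‖ ^ 2))
        ≤ K * ∑ l : Fin L, (a l) ^ 2) ∧
    sSup (Set.range (fun α : Fin L → ℝ =>
      sInf (Set.range (fun ψ : Fin L → ℝ =>
        ∑ k ∈ Finset.range K,
          ‖∑ l : Fin L, (a l : ℂ) *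
            Complex.exp (-Complex.I * ((ψ l - α l * k * T : ℝ) : ℂ))‖ ^ 2))))
      = K * ∑ l : Fin L, (a l) ^ 2 :=
  stmt1_general K L hLK T hT a
end

section
/- Adopt the directional pattern setup. If Condition (C) holds, then φ_B > π/L. -/
/-- Theorem 2, claim (i): in the directional pattern setup,
if Condition (C) holds then the break point satisfies `φ_B > π/L`. -/
theorem stmt3
    (L : ℕ) (hL : 2 ≤ L)
    (G : ℝ → ℝ) (hGnn : ∀ φ, 0 ≤ G φ)
    (hGper : ∀ φ, G (φ + 2 * Real.pi) = G φ)
    (GSL φB : ℝ) (hGSL : 0 ≤ GSL)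
    (hφB0 : 0 < φB) (hφBhalf : φB < Real.pi / 2)
    (hmain : ∀ φ ∈ Set.Ioo (-φB) φB, GSL < G φ)
    (hside : ∀ φ : ℝ, φB ≤ |φ| → |φ| ≤ Real.pi → G φ ≤ GSL)
    (Gl : ℕ → ℝ → ℝ)
    (hGl : ∀ l φ, Gl l φ = G (φ - l * (2 * Real.pi) / L))
    -- Condition (C)
    (hC : GSL < ((L / 2 : ℕ) : ℝ) / (((L + 1) / 2 : ℕ) : ℝ) *
      sInf ((fun φ => (1 / ((L : ℝ) - 1)) * ∑ l ∈ Finset.range (L - 1), Gl l φ) ''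
        Set.Icc (φB - 2 * Real.pi / L) (((L : ℝ) - 1) * (2 * Real.pi) / L - φB))) :
    Real.pi / L < φB := by
  by_contra hcon
  push_neg at hcon
  have hpi := Real.pi_pos
  have hL2 : (2 : ℝ) ≤ (L : ℝ) := by exact_mod_cast hL
  have hLpos : (0 : ℝ) < L := by linarith
  have hL1 : (0 : ℝ) < (L : ℝ) - 1 := by linarith
  set φstar : ℝ := -(Real.pi / L) with hφstar
  -- membership in the interval
  have hmem : φstar ∈ Set.Icc (φB - 2 * Real.pi / L) (((L : ℝ) - 1) * (2 * Real.pi) / L - φB) := by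
    have hdd : 2 * Real.pi / (L : ℝ) = 2 * (Real.pi / L) := mul_div_assoc 2 Real.pi (L : ℝ)
    constructor
    · have h1 : φB ≤ Real.pi / L := hcon
      rw [hφstar]; linarith [hdd]
    · have h4 : ((L : ℝ) - 1) * (2 * Real.pi) / L = 2 * Real.pi - 2 * Real.pi / L := by
        field_simp
      have h5 : 2 * Real.pi / L ≤ Real.pi := by
        rw [div_le_iff₀ hLpos]; nlinarith
      have h6 : 0 < Real.pi / L := div_pos hpi hLpos
      rw [hφstar, h4]; linarith [hdd]
  -- each term is ≤ GSL
  have hterm : ∀ l ∈ Finset.range (L - 1), Gl l φstar ≤ GSL := by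
    intro l hl
    rw [Finset.mem_range] at hl
    have hlL : (l : ℝ) ≤ (L : ℝ) - 2 := by
      have : l ≤ L - 2 := by omega
      have := (Nat.cast_le (α := ℝ)).2 this
      have hLcast : ((L - 2 : ℕ) : ℝ) = (L : ℝ) - 2 := by
        have : (2 : ℕ) ≤ L := hL
        push_cast [Nat.cast_sub this]
        ring
      linarith [hLcast ▸ this]
    rw [hGl]
    set y : ℝ := (2 * (l : ℝ) + 1) * Real.pi / L with hy
    have harg : φstar - (l : ℝ) * (2 * Real.pi) / L = -y := by
      rw [hφstar, hy]; field_simp; ring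
    rw [harg]
    have hy0 : 0 < y := by positivity
    have hyφB : Real.pi / L ≤ y := by
      rw [hy]
      gcongr
      nlinarith
    by_cases hyπ : y ≤ Real.pi
    · apply hside
      · rw [abs_neg, abs_of_pos hy0]; linarith
      · rw [abs_neg, abs_of_pos hy0]; exact hyπ
    · push_neg at hyπ
      have hper : G (-y) = G (2 * Real.pi - y) := by
        have := hGper (-y)
        rw [← this]; ring_nf
      rw [hper]
      have hz1 : 2 * Real.pi - y < Real.pi := by linarith
      have hz2 : Real.pi / L ≤ 2 * Real.pi - y := by
        have : y ≤ (2 * ((L : ℝ) - 2) + 1) * Real.pi / L := by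
          rw [hy]
          gcongr <;> nlinarith
        have h3L : (2 * ((L : ℝ) - 2) + 1) * Real.pi / L = 2 * Real.pi - 3 * Real.pi / L := by
          field_simp; ring
        have hPL : Real.pi / L ≤ 3 * Real.pi / L := by
          gcongr <;> linarith
        linarith [h3L ▸ this]
      have hz0 : 0 < 2 * Real.pi - y := by
        have := div_pos hpi hLpos; linarith
      apply hside
      · rw [abs_of_pos hz0]; linarith
      · rw [abs_of_pos hz0]; linarith
  -- the value at φstar is ≤ GSL
  have hsum : ∑ l ∈ Finset.range (L - 1), Gl l φstar ≤ ((L : ℝ) - 1) * GSL := by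
    calc ∑ l ∈ Finset.range (L - 1), Gl l φstar
        ≤ ∑ l ∈ Finset.range (L - 1), GSL := Finset.sum_le_sum hterm
      _ = ((L - 1 : ℕ) : ℝ) * GSL := by rw [Finset.sum_const, nsmul_eq_mul, Finset.card_range]
      _ = ((L : ℝ) - 1) * GSL := by
          have : ((L - 1 : ℕ) : ℝ) = (L : ℝ) - 1 := by
            have : (1 : ℕ) ≤ L := by omega
            push_cast [Nat.cast_sub this]; ring
          rw [this]
  have hval : (1 / ((L : ℝ) - 1)) * ∑ l ∈ Finset.range (L - 1), Gl l φstar ≤ GSL := by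
    rw [div_mul_eq_mul_div, one_mul, div_le_iff₀ hL1]
    linarith [hsum]
  -- sInf bound
  set S := ((fun φ => (1 / ((L : ℝ) - 1)) * ∑ l ∈ Finset.range (L - 1), Gl l φ) ''
        Set.Icc (φB - 2 * Real.pi / L) (((L : ℝ) - 1) * (2 * Real.pi) / L - φB)) with hS
  have hbdd : BddBelow S := by
    refine ⟨0, ?_⟩
    rintro x ⟨φ, _, rfl⟩
    have : ∀ l ∈ Finset.range (L - 1), 0 ≤ Gl l φ := by
      intro l _; rw [hGl]; exact hGnn _
    have hsum0 : 0 ≤ ∑ l ∈ Finset.range (L - 1), Gl l φ := Finset.sum_nonneg this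
    positivity
  have hmemS : (1 / ((L : ℝ) - 1)) * ∑ l ∈ Finset.range (L - 1), Gl l φstar ∈ S :=
    ⟨φstar, hmem, rfl⟩
  have hInf : sInf S ≤ GSL := le_trans (csInf_le hbdd hmemS) hval
  -- ratio ≤ 1
  have hden : (0 : ℝ) < (((L + 1) / 2 : ℕ) : ℝ) := by
    have : 1 ≤ (L + 1) / 2 := by omega
    exact_mod_cast Nat.lt_of_lt_of_le Nat.zero_lt_one this
  have hnum : (0 : ℝ) ≤ ((L / 2 : ℕ) : ℝ) := by positivity
  have hratio1 : ((L / 2 : ℕ) : ℝ) / (((L + 1) / 2 : ℕ) : ℝ) ≤ 1 := by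
    rw [div_le_one hden]
    exact_mod_cast Nat.div_le_div_right (Nat.le_succ L)
  have hratio0 : (0 : ℝ) ≤ ((L / 2 : ℕ) : ℝ) / (((L + 1) / 2 : ℕ) : ℝ) := by positivity
  have : ((L / 2 : ℕ) : ℝ) / (((L + 1) / 2 : ℕ) : ℝ) * sInf S ≤ GSL := by
    calc ((L / 2 : ℕ) : ℝ) / (((L + 1) / 2 : ℕ) : ℝ) * sInf S
        ≤ ((L / 2 : ℕ) : ℝ) / (((L + 1) / 2 : ℕ) : ℝ) * GSL :=
          mul_le_mul_of_nonneg_left hInf hratio0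
      _ ≤ 1 * GSL := mul_le_mul_of_nonneg_right hratio1 hGSL
      _ = GSL := one_mul _
  linarith
end

section
/- Adopt the directional pattern setup and assume additionally that G is even (G(φ) = G(−φ) for all φ) and that Condition (C) holds. For an integer L_0 with 1 ≤ L_0 ≤ L−1, define the equivalent radiation pattern Ḡ(φ, L_0) = (1/L_0)·Σ_{l=0}^{L_0−1} G_l(φ) + (1/(L−L_0))·Σ_{l=L_0}^{L−1} G_l(φ). Then for every integer L_0 with ⌈L/2⌉ < L_0 ≤ L−1, one has inf_{φ ∈ [0, 2π)} Ḡ(φ, L_0) < inf_{φ ∈ [0, 2π)} Ḡ(φ, ⌈L/2⌉). Consequently, L_0 = ⌈L/2⌉ is the unique maximizer of L_0 ↦ inf_{φ ∈ [0, 2π)} Ḡ(φ, L_0) over the integers L_0 with ⌈L/2⌉ ≤ L_0 ≤ L−1; i.e., with a two-port receiver it is optimal to combine ⌈L/2⌉ antennas in one group and ⌊L/2⌋ in the other. -/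
/-!
Sample `G` on the grid `φ₀ - j·2π/L`. At the grid point `φ₀ + k·2π/L` the equivalent pattern of
the grouping `(n, L - n)` is `(S - t)/n + t/(L - n)`, where `S` is the sum of all `L` samples and
`t` the sum of `L - n` consecutive ones. Condition (C) yields `⌊L/2⌋` consecutive samples that are
sidelobe values of `G_{L-1}` at points of its interval, hence each at most
`μ = min(G_SL, S - (L-1)·I)` with `I` the infimum in (C). If `B` is the sum seen by the
`⌊L/2⌋`-group at `φ₀`, then a prefix of length `L - L₀` of either that window or the low window
has sum `t ≤ min(B, (L - L₀)·μ)`; for such `t` an elementary estimate gives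
`Ḡ(ψ, L₀) + δ ≤ Ḡ(φ₀, ⌈L/2⌉)` with `δ > 0` independent of `φ₀`.
-/

open Real Function Finset

section WindowSum

variable {β : Type*} [AddCommMonoid β]

def windowSum (g : ℤ → β) (a : ℤ) (n : ℕ) : β := ∑ i ∈ range n, g (a + i)

lemma windowSum_add (g : ℤ → β) (a : ℤ) (n₁ n₂ : ℕ) :
    windowSum g a (n₁ + n₂) = windowSum g a n₁ + windowSum g (a + n₁) n₂ := by
  simp only [windowSum, sum_range_add, Nat.cast_add, add_assoc]

lemma windowSum_eq_of_periodic {g : ℤ → β} {L : ℕ} (hg : Periodic g (L : ℤ)) (a : ℤ) :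
    windowSum g a L = windowSum g 0 L := by
  have hstep (b : ℤ) : windowSum g (b + 1) L = windowSum g b L := by
    cases L with
    | zero => rfl
    | succ n =>
      have hwrap : g (b + 1 + n) = g (b + 0) := by
        rw [add_zero, add_assoc, add_comm 1, ← Nat.cast_succ]; exact hg b
      rw [windowSum, windowSum, sum_range_succ, sum_range_succ', hwrap]
      congr 1
      exact sum_congr rfl fun i _ => by push_cast; ring_nf
  induction a using Int.induction_on with
  | zero => rfl
  | succ b ih => rw [hstep, ih]
  | pred b ih => rw [← ih, ← hstep, sub_add_cancel]

variable [LinearOrder β] [IsOrderedAddMonoid β]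

lemma windowSum_mono {g : ℤ → β} (hg : 0 ≤ g) (a : ℤ) {n₁ n₂ : ℕ} (h : n₁ ≤ n₂) :
    windowSum g a n₁ ≤ windowSum g a n₂ :=
  sum_le_sum_of_subset_of_nonneg (range_subset_range.2 h) fun _ _ _ => hg _

lemma windowSum_le_nsmul {g : ℤ → β} {a : ℤ} {n : ℕ} {μ : β} (h : ∀ i < n, g (a + i) ≤ μ) :
    windowSum g a n ≤ n • μ := by
  simpa [windowSum] using sum_le_card_nsmul (range n) _ μ fun i hi => h i (mem_range.1 hi)

lemma exists_windowSum_le_min {g : ℤ → β} (hg : 0 ≤ g) {q m : ℕ} (hqm : q ≤ m) (c : ℤ)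
    {a : ℤ} {μ : β} (ha : ∀ i < m, g (a + i) ≤ μ) :
    ∃ s, windowSum g s q ≤ windowSum g c m ∧ windowSum g s q ≤ q • μ := by
  have hlow : windowSum g a q ≤ q • μ := windowSum_le_nsmul fun i hi => ha i (hi.trans_le hqm)
  rcases le_total (windowSum g c m) (q • μ) with h | h
  · exact ⟨c, (windowSum_mono hg c hqm), (windowSum_mono hg c hqm).trans h⟩
  · exact ⟨a, hlow.trans h, hlow⟩

end WindowSum

/-- `(S - B) / a + B / b` is the gain of the grouping `(a, b)` when the `b`-group collects the
part `B` of the total beam sum `S`. -/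
lemma exists_regrouping_margin {a b p q I σ : ℝ} (hq : 1 ≤ q) (hba : b ≤ a) (hap : a < p)
    (hsum : p + q = a + b) (hσ : 0 ≤ σ) (hσI : σ < b / a * I) :
    ∃ δ > 0, ∀ S B t μ : ℝ, μ ≤ σ → (a + b - 1) * I + μ ≤ S → t ≤ B → t ≤ q * μ →
      (S - t) / p + t / q + δ ≤ (S - B) / a + B / b := by
  have hb : 0 < b := by linarith
  have ha : 0 < a := by linarith
  have hp : 0 < p := by linarith
  have hq0 : 0 < q := by linarith
  have hI : 0 < I := pos_of_mul_pos_right (hσ.trans_lt hσI) (by positivity)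
  have hexcess : q * ((1 / q - 1 / p) - (1 / b - 1 / a)) =
      (p - a) / (a * p) * ((a * p / b + q - 1) + 1) := by
    obtain rfl : q = a + b - p := by linarith
    field_simp
    ring
  have hgain (S B : ℝ) :
      (S - B) / a + B / b = S / p + (p - a) / (a * p) * S + B * (1 / b - 1 / a) := by
    field_simp
    ring
  set r := (p - a) / (a * p)
  set X := a * p / b + q - 1 with hX_def
  have hr : 0 < r := div_pos (by linarith) (by positivity)
  have hX : 0 < X := by
    have : 0 < a * p / b := by positivity
    linarith
  refine ⟨r * ((a + b - 1) * I - σ * X), mul_pos hr (sub_pos.2 ?_), ?_⟩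
  · have hba' : b / a ≤ 1 := div_le_one_of_le₀ hba ha.le
    calc σ * X < b / a * I * X := mul_lt_mul_of_pos_right hσI hX
      _ = I * (p + (q - 1) * (b / a)) := by rw [hX_def]; field_simp; ring
      _ ≤ I * (p + (q - 1)) := by gcongr; exact mul_le_of_le_one_right (by linarith) hba'
      _ = (a + b - 1) * I := by rw [← hsum]; ring
  · intro S B t μ hμ hS htB htμ
    have hY : 0 ≤ 1 / b - 1 / a := sub_nonneg.2 (one_div_le_one_div_of_le hb hba)
    have hYc : 0 ≤ (1 / q - 1 / p) - (1 / b - 1 / a) := by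
      have := one_div_le_one_div_of_le hq0 (show q ≤ b by linarith)
      have := one_div_le_one_div_of_le ha hap.le
      linarith
    calc (S - t) / p + t / q + r * ((a + b - 1) * I - σ * X)
        = S / p + t * (1 / b - 1 / a) + t * ((1 / q - 1 / p) - (1 / b - 1 / a)) +
            r * ((a + b - 1) * I - σ * X) := by ring
      _ ≤ S / p + B * (1 / b - 1 / a) + q * μ * ((1 / q - 1 / p) - (1 / b - 1 / a)) +
            r * ((a + b - 1) * I - σ * X) := by gcongr
      _ = S / p + B * (1 / b - 1 / a) + r * ((a + b - 1) * I + μ + X * (μ - σ)) := by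
          rw [mul_assoc, mul_left_comm, hexcess]; ring
      _ ≤ S / p + B * (1 / b - 1 / a) + r * S := by
          gcongr
          linarith [mul_nonpos_of_nonneg_of_nonpos hX.le (sub_nonpos.2 hμ)]
      _ = (S - B) / a + B / b := by rw [hgain]; ring

lemma csInf_image_lt_of_forall_exists_add_le {α : Type*} {s : Set α} {f g : α → ℝ} {δ : ℝ}
    (hs : s.Nonempty) (hf : BddBelow (f '' s)) (hδ : 0 < δ)
    (h : ∀ x ∈ s, ∃ y ∈ s, f y + δ ≤ g x) : sInf (f '' s) < sInf (g '' s) := by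
  have : sInf (f '' s) + δ ≤ sInf (g '' s) := by
    refine le_csInf (hs.image g) ?_
    rintro _ ⟨x, hx, rfl⟩
    obtain ⟨y, hy, hyx⟩ := h x hx
    linarith [csInf_le hf ⟨y, hy, rfl⟩]
  linarith

lemma exists_forall_sub_mul_mem_Icc {Δ lo hi : ℝ} {m : ℕ} (hΔ : 0 < Δ) (h : lo + m * Δ ≤ hi)
    (x : ℝ) : ∃ k : ℤ, ∀ i < m, x + (k - i) * Δ ∈ Set.Icc lo hi := by
  obtain ⟨k, hk, -⟩ := existsUnique_add_zsmul_mem_Ioc hΔ x (hi - Δ)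
  rw [zsmul_eq_mul, sub_add_cancel] at hk
  refine ⟨k, fun i hi => ?_⟩
  have hi' : ((i : ℝ) + 1) * Δ ≤ m * Δ := by gcongr; exact_mod_cast hi
  have : 0 ≤ (i : ℝ) * Δ := by positivity
  constructor <;> nlinarith [hk.1, hk.2]

noncomputable def equivPattern (G : ℝ → ℝ) (L n : ℕ) (φ : ℝ) : ℝ :=
  (1 / (n : ℝ)) * ∑ l ∈ range n, G (φ - l * (2 * π) / L) +
    (1 / ((L : ℝ) - n)) * ∑ l ∈ Ico n L, G (φ - l * (2 * π) / L)

/-- Indexed so that `G_l (φ₀ + k * 2π / L) = gridSample G L φ₀ (l - k)`. -/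
noncomputable def gridSample (G : ℝ → ℝ) (L : ℕ) (φ₀ : ℝ) (j : ℤ) : ℝ :=
  G (φ₀ - j * (2 * π) / L)

section Pattern

variable {G : ℝ → ℝ} {L : ℕ}

lemma equivPattern_periodic (hG : Periodic G (2 * π)) (n : ℕ) :
    Periodic (equivPattern G L n) (2 * π) := fun φ => by
  simp only [equivPattern, add_sub_right_comm φ (2 * π), hG _]

lemma equivPattern_nonneg (hG : ∀ φ, 0 ≤ G φ) {n : ℕ} (hn : n ≤ L) (φ : ℝ) :
    0 ≤ equivPattern G L n φ := by
  have hL : 0 ≤ 1 / ((L : ℝ) - n) := one_div_nonneg.2 (sub_nonneg.2 (by exact_mod_cast hn))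
  have hsum (s : Finset ℕ) : 0 ≤ ∑ l ∈ s, G (φ - l * (2 * π) / L) := sum_nonneg fun _ _ => hG _
  exact add_nonneg (mul_nonneg (by positivity) (hsum _)) (mul_nonneg hL (hsum _))

lemma gridSample_periodic (hG : Periodic G (2 * π)) (hL : L ≠ 0) (φ₀ : ℝ) :
    Periodic (gridSample G L φ₀) (L : ℤ) := fun j => by
  have : ((j + L : ℤ) : ℝ) * (2 * π) / L = j * (2 * π) / L + 2 * π := by
    push_cast; field_simp
  simp only [gridSample, this, ← sub_sub, hG.sub_eq]

lemma sum_range_eq_windowSum_gridSample (φ₀ : ℝ) (k : ℤ) (n : ℕ) :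
    ∑ l ∈ range n, G (φ₀ + k * (2 * π) / L - l * (2 * π) / L) =
      windowSum (gridSample G L φ₀) (-k) n :=
  sum_congr rfl fun l _ => by unfold gridSample; congr 1; push_cast; ring

lemma equivPattern_add_mul (hG : Periodic G (2 * π)) (hL : L ≠ 0) {n : ℕ} (hn : n ≤ L)
    (φ₀ : ℝ) (k : ℤ) :
    equivPattern G L n (φ₀ + k * (2 * π) / L) =
      (windowSum (gridSample G L φ₀) 0 L - windowSum (gridSample G L φ₀) (n - k) (L - n)) / n +
        windowSum (gridSample G L φ₀) (n - k) (L - n) / (L - n) := by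
  have hIco : ∑ l ∈ Ico n L, G (φ₀ + k * (2 * π) / L - l * (2 * π) / L) =
      windowSum (gridSample G L φ₀) (n - k) (L - n) := by
    rw [sum_Ico_eq_sum_range]
    exact sum_congr rfl fun i _ => by unfold gridSample; congr 1; push_cast; ring
  have htotal := windowSum_add (gridSample G L φ₀) (-k) n (L - n)
  rw [Nat.add_sub_cancel' hn, windowSum_eq_of_periodic (gridSample_periodic hG hL φ₀),
    neg_add_eq_sub] at htotal
  rw [equivPattern, sum_range_eq_windowSum_gridSample, hIco, htotal]
  ring

variable {GSL φB : ℝ}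

lemma le_of_mem_Icc_of_sidelobe (hG : Periodic G (2 * π))
    (hside : ∀ φ : ℝ, φB ≤ |φ| → |φ| ≤ π → G φ ≤ GSL) (hφB : 0 ≤ φB) {x : ℝ}
    (hx : x ∈ Set.Icc (φB - 2 * π) (-φB)) : G x ≤ GSL := by
  obtain ⟨hlo, hhi⟩ := hx
  rcases le_or_gt (-π) x with h | h
  · exact hside x (by rw [abs_of_nonpos (by linarith)]; linarith)
      (by rw [abs_of_nonpos (by linarith)]; linarith)
  · rw [← hG x]
    exact hside _ (by rw [abs_of_nonneg (by linarith)]; linarith)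
      (by rw [abs_of_nonneg (by linarith)]; linarith)

lemma gridSample_le_min_of_mem_Icc (hG : Periodic G (2 * π))
    (hside : ∀ φ : ℝ, φB ≤ |φ| → |φ| ≤ π → G φ ≤ GSL) (hφB : 0 ≤ φB) (hL : 2 ≤ L) {I : ℝ}
    (hI : ∀ φ ∈ Set.Icc (φB - 2 * π / L) (((L : ℝ) - 1) * (2 * π) / L - φB),
      I ≤ 1 / ((L : ℝ) - 1) * ∑ l ∈ range (L - 1), G (φ - l * (2 * π) / L))
    {φ₀ : ℝ} {k : ℤ}
    (hk : φ₀ + k * (2 * π) / L ∈ Set.Icc (φB - 2 * π / L) (((L : ℝ) - 1) * (2 * π) / L - φB)) :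
    gridSample G L φ₀ (L - 1 - k) ≤
      min GSL (windowSum (gridSample G L φ₀) 0 L - (L - 1) * I) := by
  have hLR : (2 : ℝ) ≤ L := by exact_mod_cast hL
  have hlast : gridSample G L φ₀ (L - 1 - k) =
      G (φ₀ + k * (2 * π) / L - ((L : ℝ) - 1) * (2 * π) / L) := by
    unfold gridSample; congr 1; push_cast; ring
  have hsplit : windowSum (gridSample G L φ₀) 0 L =
      ∑ l ∈ range (L - 1), G (φ₀ + k * (2 * π) / L - l * (2 * π) / L) +
        gridSample G L φ₀ (L - 1 - k) := by
    have h := windowSum_add (gridSample G L φ₀) (-k) (L - 1) 1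
    rw [Nat.sub_add_cancel (by omega : 1 ≤ L),
      windowSum_eq_of_periodic (gridSample_periodic hG (by omega) φ₀)] at h
    rw [h, sum_range_eq_windowSum_gridSample]
    simp [windowSum, Nat.cast_sub (by omega : 1 ≤ L), sub_eq_neg_add, add_comm]
  refine le_min ?_ ?_
  · have htwoπ : 2 * π / L + ((L : ℝ) - 1) * (2 * π) / L = 2 * π := by field_simp; ring
    rw [hlast]
    exact le_of_mem_Icc_of_sidelobe hG hside hφB ⟨by linarith [hk.1], by linarith [hk.2]⟩
  · have h := hI _ hk
    rw [one_div_mul_eq_div, le_div_iff₀ (by linarith)] at h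
    linarith

lemma exists_low_window (hG : Periodic G (2 * π))
    (hside : ∀ φ : ℝ, φB ≤ |φ| → |φ| ≤ π → G φ ≤ GSL) (hφB0 : 0 ≤ φB) (hφB : φB ≤ π / 2)
    (hL : 2 ≤ L) {m : ℕ} (hm : 2 * m ≤ L) {I : ℝ}
    (hI : ∀ φ ∈ Set.Icc (φB - 2 * π / L) (((L : ℝ) - 1) * (2 * π) / L - φB),
      I ≤ 1 / ((L : ℝ) - 1) * ∑ l ∈ range (L - 1), G (φ - l * (2 * π) / L))
    (φ₀ : ℝ) : ∃ a : ℤ, ∀ i < m,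
      gridSample G L φ₀ (a + i) ≤ min GSL (windowSum (gridSample G L φ₀) 0 L - (L - 1) * I) := by
  have hLpos : (0 : ℝ) < L := by positivity
  -- the window fits since `2 φB ≤ π ≤ (L - m) · 2π / L`
  have hfit : φB - 2 * π / L + m * (2 * π / L) ≤ ((L : ℝ) - 1) * (2 * π) / L - φB := by
    have hmR : (2 * m : ℝ) ≤ L := by exact_mod_cast hm
    have e : ((L : ℝ) - 1) * (2 * π) / L - φB - (φB - 2 * π / L + m * (2 * π / L)) =
        π * (L - 2 * m) / L + (π - 2 * φB) := by field_simp; ring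
    have : 0 ≤ π * (L - 2 * m) / L := div_nonneg (mul_nonneg pi_pos.le (by linarith)) hLpos.le
    linarith
  obtain ⟨k, hk⟩ := exists_forall_sub_mul_mem_Icc (by positivity) hfit φ₀
  refine ⟨L - 1 - k, fun i hi => ?_⟩
  have h := gridSample_le_min_of_mem_Icc hG hside hφB0 hL hI (φ₀ := φ₀) (k := k - i)
    (by push_cast; simpa only [mul_div_assoc] using hk i hi)
  rwa [show (L : ℤ) - 1 - (k - i) = L - 1 - k + i by ring] at h

lemma exists_pos_forall_exists_equivPattern_add_le (hGnn : ∀ φ, 0 ≤ G φ)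
    (hG : Periodic G (2 * π)) (hside : ∀ φ : ℝ, φB ≤ |φ| → |φ| ≤ π → G φ ≤ GSL)
    (hφB0 : 0 ≤ φB) (hφB : φB ≤ π / 2) {a b p : ℕ} (hab : a + b = L) (hba : b ≤ a) (hap : a < p)
    (hpL : p < L) {I : ℝ}
    (hI : ∀ φ ∈ Set.Icc (φB - 2 * π / L) (((L : ℝ) - 1) * (2 * π) / L - φB),
      I ≤ 1 / ((L : ℝ) - 1) * ∑ l ∈ range (L - 1), G (φ - l * (2 * π) / L))
    (hGSL : 0 ≤ GSL) (hC : GSL < b / a * I) :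
    ∃ δ > 0, ∀ φ₀, ∃ ψ, equivPattern G L p ψ + δ ≤ equivPattern G L a φ₀ := by
  have hqR : ((L - p : ℕ) : ℝ) = L - p := Nat.cast_sub hpL.le
  have hLR : (L : ℝ) = a + b := by exact_mod_cast hab.symm
  obtain ⟨δ, hδ, hmargin⟩ := exists_regrouping_margin (p := p) (q := L - p)
    (by rw [← hqR]; exact_mod_cast (by omega : 1 ≤ L - p)) (by exact_mod_cast hba)
    (by exact_mod_cast hap) (by linarith) hGSL hC
  refine ⟨δ, hδ, fun φ₀ => ?_⟩
  obtain ⟨c, hc⟩ := exists_low_window hG hside hφB0 hφB (by omega) (m := b) (by omega) hI φ₀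
  obtain ⟨s, hsB, hsμ⟩ := exists_windowSum_le_min (fun _ => hGnn _) (q := L - p) (by omega) a hc
  refine ⟨φ₀ + ((p - s : ℤ) : ℝ) * (2 * π) / L, ?_⟩
  have hbalanced := equivPattern_add_mul hG (L := L) (by omega) (n := a) (by omega) φ₀ 0
  simp only [Int.cast_zero, zero_mul, zero_div, add_zero, sub_zero] at hbalanced
  rw [show L - a = b by omega, show (L : ℝ) - a = b by linarith] at hbalanced
  rw [equivPattern_add_mul hG (by omega) hpL.le, sub_sub_cancel, hbalanced]
  refine hmargin _ _ _ _ (min_le_left _ _) ?_ hsB (by rwa [nsmul_eq_mul, hqR] at hsμ)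
  have : ((L : ℝ) - 1) * I = (a + b - 1) * I := by rw [hLR]
  linarith [min_le_right GSL (windowSum (gridSample G L φ₀) 0 L - (L - 1) * I)]

end Pattern

theorem stmt4_general
(L : ℕ)
    (G : ℝ → ℝ) (hGnn : ∀ φ, 0 ≤ G φ)
    (hGper : ∀ φ, G (φ + 2 * Real.pi) = G φ)
    (GSL φB : ℝ) (hGSL : 0 ≤ GSL)
    (hφB0 : 0 < φB) (hφBhalf : φB < Real.pi / 2)
    (hside : ∀ φ : ℝ, φB ≤ |φ| → |φ| ≤ Real.pi → G φ ≤ GSL)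
    (Gl : ℕ → ℝ → ℝ)
    (hGl : ∀ l φ, Gl l φ = G (φ - l * (2 * Real.pi) / L))
-- Condition (C)
    (hC : GSL < ((L / 2 : ℕ) : ℝ) / (((L + 1) / 2 : ℕ) : ℝ) *
      sInf ((fun φ => (1 / ((L : ℝ) - 1)) * ∑ l ∈ Finset.range (L - 1), Gl l φ) ''
        Set.Icc (φB - 2 * Real.pi / L) (((L : ℝ) - 1) * (2 * Real.pi) / L - φB)))
(Gbar : ℕ → ℝ → ℝ)
    (hGbar : ∀ L0 φ, Gbar L0 φ =
      (1 / (L0 : ℝ)) * ∑ l ∈ Finset.range L0, Gl l φ +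
      (1 / ((L : ℝ) - L0)) * ∑ l ∈ Finset.Ico L0 L, Gl l φ) :
    ∀ L0 : ℕ, (L + 1) / 2 < L0 → L0 ≤ L - 1 →
      sInf (Gbar L0 '' Set.Ico (0:ℝ) (2 * Real.pi)) <
      sInf (Gbar ((L + 1) / 2) '' Set.Ico (0:ℝ) (2 * Real.pi)) := by
  intro L0 hL0 hL0L
  obtain rfl : Gbar = equivPattern G L := by
    funext n φ; simp only [hGbar, hGl, equivPattern]
  set F : ℝ → ℝ := fun φ => 1 / ((L : ℝ) - 1) * ∑ l ∈ range (L - 1), G (φ - l * (2 * π) / L)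
  set J := Set.Icc (φB - 2 * π / L) (((L : ℝ) - 1) * (2 * π) / L - φB)
  have hI : ∀ φ ∈ J, sInf (F '' J) ≤ F φ := by
    refine fun φ hφ => csInf_le ⟨0, ?_⟩ (Set.mem_image_of_mem F hφ)
    rintro _ ⟨ψ, -, rfl⟩
    have : (1 : ℝ) ≤ L := by exact_mod_cast (by omega : 1 ≤ L)
    exact mul_nonneg (one_div_nonneg.2 (by linarith)) (sum_nonneg fun l _ => hGnn _)
  obtain ⟨δ, hδ, hgap⟩ := exists_pos_forall_exists_equivPattern_add_le hGnn hGper hside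
    hφB0.le hφBhalf.le (a := (L + 1) / 2) (b := L / 2) (by omega) (by omega) hL0 (by omega) hI
    hGSL (by simpa only [hGl] using hC)
  refine csInf_image_lt_of_forall_exists_add_le ⟨0, le_rfl, two_pi_pos⟩ ⟨0, ?_⟩ hδ
    fun φ₀ _ => ?_
  · rintro _ ⟨φ, -, rfl⟩
    exact equivPattern_nonneg hGnn (by omega) φ
  obtain ⟨ψ, hψ⟩ := hgap φ₀
  obtain ⟨y, hy, hyψ⟩ := (equivPattern_periodic hGper L0).exists_mem_Ico₀ two_pi_pos ψ
  exact ⟨y, hy, hyψ ▸ hψ⟩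

/-- Theorem 2, claim (ii): under Condition (C), with symmetric
pattern `G`, for every group size `L_0` with `⌈L/2⌉ < L_0 ≤ L−1`, the
worst-case gain of the equivalent pattern for the grouping `(L_0, L−L_0)` is
strictly smaller than that of the balanced grouping `(⌈L/2⌉, ⌊L/2⌋)`;
hence `L_0 = ⌈L/2⌉` is optimal. -/
theorem stmt4
(L : ℕ) (hL : 2 ≤ L)
    (G : ℝ → ℝ) (hGnn : ∀ φ, 0 ≤ G φ)
    (hGper : ∀ φ, G (φ + 2 * Real.pi) = G φ)
    (GSL φB : ℝ) (hGSL : 0 ≤ GSL)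
    (hφB0 : 0 < φB) (hφBhalf : φB < Real.pi / 2)
    (hmain : ∀ φ ∈ Set.Ioo (-φB) φB, GSL < G φ)
    (hside : ∀ φ : ℝ, φB ≤ |φ| → |φ| ≤ Real.pi → G φ ≤ GSL)
    (Gl : ℕ → ℝ → ℝ)
    (hGl : ∀ l φ, Gl l φ = G (φ - l * (2 * Real.pi) / L))
    (hGeven : ∀ φ, G (-φ) = G φ)
-- Condition (C)
    (hC : GSL < ((L / 2 : ℕ) : ℝ) / (((L + 1) / 2 : ℕ) : ℝ) *
      sInf ((fun φ => (1 / ((L : ℝ) - 1)) * ∑ l ∈ Finset.range (L - 1), Gl l φ) ''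
        Set.Icc (φB - 2 * Real.pi / L) (((L : ℝ) - 1) * (2 * Real.pi) / L - φB)))
(Gbar : ℕ → ℝ → ℝ)
    (hGbar : ∀ L0 φ, Gbar L0 φ =
      (1 / (L0 : ℝ)) * ∑ l ∈ Finset.range L0, Gl l φ +
      (1 / ((L : ℝ) - L0)) * ∑ l ∈ Finset.Ico L0 L, Gl l φ) :
    ∀ L0 : ℕ, (L + 1) / 2 < L0 → L0 ≤ L - 1 →
      sInf (Gbar L0 '' Set.Ico (0:ℝ) (2 * Real.pi)) <
      sInf (Gbar ((L + 1) / 2) '' Set.Ico (0:ℝ) (2 * Real.pi)) :=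
  stmt4_general L G hGnn hGper GSL φB hGSL hφB0 hφBhalf hside Gl hGl hC Gbar hGbar
end

section
/- Adopt the directional pattern setup. If G_SL < (⌊L/2⌋/⌈L/2⌉) · inf_{φ ∈ [0, 2π/L)} (1/L)·Σ_{l=0}^{L−1} G_l(φ), then Condition (C) holds, i.e., G_SL < (⌊L/2⌋/⌈L/2⌉) · inf_{φ ∈ [φ_B − 2π/L, (L−1)·2π/L − φ_B]} (1/(L−1))·Σ_{l=0}^{L−2} G_l(φ). -/
/-!
On `[φ_B - 2π/L, (L-1)·2π/L - φ_B]` the omitted last shift `G_{L-1}(φ)` is evaluated in the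
side-lobe region, so it is at most `G_SL`. The full sum `Σ_{l<L} G_l` is `2π/L`-periodic, hence
at least `L·m` everywhere, where `m` is the infimum in the hypothesis. The partial average is
therefore at least `(L·m - G_SL)/(L-1)`, and `G_SL < r·m` with `r = ⌊L/2⌋/⌈L/2⌉ ≤ 1` and
`G_SL ≥ 0` gives `G_SL < r·(L·m - G_SL)/(L-1)`.
-/

open Real Set Finset Function

theorem Function.Periodic.sum_range_sub_mul {M : Type*} [AddCommMonoid M] {G : ℝ → M}
    {p : ℝ} {n : ℕ} (hG : Periodic G (n * p)) :
    Periodic (fun φ => ∑ l ∈ range n, G (φ - l * p)) p := by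
  intro φ
  cases n with
  | zero => simp
  | succ k =>
    have hwrap : G (φ + p) = G (φ - k * p) := by
      rw [← hG (φ - k * p)]; push_cast; ring_nf
    dsimp only
    rw [sum_range_succ', sum_range_succ, Nat.cast_zero, zero_mul, sub_zero, hwrap]
    congr 1
    refine sum_congr rfl fun i _ => ?_
    push_cast; ring_nf

theorem Function.Periodic.csInf_image_Ico_le {α β : Type*} [AddCommGroup α] [LinearOrder α]
    [IsOrderedAddMonoid α] [Archimedean α] [ConditionallyCompleteLattice β] {g : α → β} {p : α}
    (hg : Periodic g p) (hp : 0 < p) (hbdd : BddBelow (g '' Ico 0 p)) (x : α) :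
    sInf (g '' Ico 0 p) ≤ g x := by
  obtain ⟨y, hy, hxy⟩ := hg.exists_mem_Ico₀ hp x
  exact hxy ▸ csInf_le hbdd (mem_image_of_mem g hy)

theorem Function.Periodic.le_of_mem_Icc_sub_two_pi {G : ℝ → ℝ} {c φB ψ : ℝ}
    (hG : Periodic G (2 * π)) (hφB : 0 < φB)
    (hside : ∀ φ : ℝ, φB ≤ |φ| → |φ| ≤ π → G φ ≤ c) (hψ : ψ ∈ Icc (φB - 2 * π) (-φB)) :
    G ψ ≤ c := by
  obtain ⟨hψl, hψu⟩ := hψ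
  rcases le_or_gt (-π) ψ with hψπ | hψπ
  · exact hside ψ (by rw [abs_of_neg (by linarith)]; linarith)
      (by rw [abs_of_neg (by linarith)]; linarith)
  · rw [← hG ψ]
    exact hside _ (by rw [abs_of_pos (by linarith)]; linarith)
      (by rw [abs_of_pos (by linarith)]; linarith)

theorem mul_sInf_image_Ico_le_sum_range_sub_mul {G : ℝ → ℝ} {p : ℝ} {n : ℕ}
    (hG : Periodic G (n * p)) (hGnn : ∀ φ, 0 ≤ G φ) (hp : 0 < p) (hn : 0 < n) (φ : ℝ) :
    n * sInf ((fun φ => 1 / (n : ℝ) * ∑ l ∈ range n, G (φ - l * p)) '' Ico 0 p) ≤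
      ∑ l ∈ range n, G (φ - l * p) := by
  have hbdd : BddBelow ((fun φ => 1 / (n : ℝ) * ∑ l ∈ range n, G (φ - l * p)) '' Ico 0 p) :=
    ⟨0, forall_mem_image.2 fun φ _ => mul_nonneg (by positivity) (sum_nonneg fun l _ => hGnn _)⟩
  have := (hG.sum_range_sub_mul.comp (fun s => 1 / (n : ℝ) * s)).csInf_image_Ico_le hp hbdd φ
  rw [← le_div_iff₀' (by positivity)]
  exact this.trans_eq (one_div_mul_eq_div _ _)

theorem div_sub_one_le_one_div_mul_sum_range_pred {f : ℕ → ℝ} {n : ℕ} {a c : ℝ} (hn : 1 < n)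
    (hsum : a ≤ ∑ l ∈ range n, f l) (hlast : f (n - 1) ≤ c) :
    (a - c) / ((n : ℝ) - 1) ≤ 1 / ((n : ℝ) - 1) * ∑ l ∈ range (n - 1), f l := by
  rw [← Nat.sub_add_cancel hn.le, sum_range_succ] at hsum
  have hn' : (1 : ℝ) < n := by exact_mod_cast hn
  rw [one_div_mul_eq_div]
  exact div_le_div_of_nonneg_right (by linarith) (by linarith)

theorem lt_mul_div_sub_one_of_lt_mul {c r m L : ℝ} (hc : 0 ≤ c) (hr : r ≤ 1) (hL : 1 < L)
    (h : c < r * m) : c < r * ((L * m - c) / (L - 1)) := by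
  rw [← mul_div_assoc, lt_div_iff₀ (by linarith)]
  nlinarith

theorem stmt5_general
(L : ℕ) (hL : 2 ≤ L)
    (G : ℝ → ℝ) (hGnn : ∀ φ, 0 ≤ G φ)
    (hGper : ∀ φ, G (φ + 2 * Real.pi) = G φ)
    (GSL φB : ℝ) (hGSL : 0 ≤ GSL)
    (hφB0 : 0 < φB) (hφBhalf : φB < Real.pi / 2)
    (hside : ∀ φ : ℝ, φB ≤ |φ| → |φ| ≤ Real.pi → G φ ≤ GSL)
    (Gl : ℕ → ℝ → ℝ)
    (hGl : ∀ l φ, Gl l φ = G (φ - l * (2 * Real.pi) / L))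
    (hcc : GSL < ((L / 2 : ℕ) : ℝ) / (((L + 1) / 2 : ℕ) : ℝ) *
      sInf ((fun φ => (1 / (L : ℝ)) * ∑ l ∈ Finset.range L, Gl l φ) ''
        Set.Ico (0:ℝ) (2 * Real.pi / L))) :
    GSL < ((L / 2 : ℕ) : ℝ) / (((L + 1) / 2 : ℕ) : ℝ) *
      sInf ((fun φ => (1 / ((L : ℝ) - 1)) * ∑ l ∈ Finset.range (L - 1), Gl l φ) ''
        Set.Icc (φB - 2 * Real.pi / L) (((L : ℝ) - 1) * (2 * Real.pi) / L - φB)) := by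
  set p := 2 * π / L with hp
  have hL1 : (1 : ℝ) < L := by exact_mod_cast hL
  have hp0 : 0 < p := by positivity
  have hLp : (L : ℝ) * p = 2 * π := by rw [hp]; field_simp
  have hlast : ((L - 1 : ℕ) : ℝ) * p = 2 * π - p := by
    rw [Nat.cast_pred (by omega), sub_one_mul, hLp]
  have hupper : ((L : ℝ) - 1) * (2 * π) / L = 2 * π - p := by
    rw [hp, mul_div_assoc, sub_one_mul, ← hp, hLp]
  obtain rfl : Gl = fun (l : ℕ) φ => G (φ - l * p) := by
    funext l φ; rw [hGl, hp, mul_div_assoc]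
  have hfull := mul_sInf_image_Ico_le_sum_range_sub_mul (hLp ▸ hGper) hGnn hp0 (by omega)
  have hpartial : ∀ φ ∈ Icc (φB - p) (((L : ℝ) - 1) * (2 * π) / L - φB),
      _ ≤ 1 / ((L : ℝ) - 1) * ∑ l ∈ range (L - 1), G (φ - l * p) := fun φ ⟨hφl, hφu⟩ =>
    div_sub_one_le_one_div_mul_sum_range_pred hL (hfull φ)
      (Periodic.le_of_mem_Icc_sub_two_pi hGper hφB0 hside ⟨by linarith, by linarith⟩)
  have hne : (Icc (φB - p) (((L : ℝ) - 1) * (2 * π) / L - φB)).Nonempty :=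
    nonempty_Icc.2 (by linarith [pi_pos])
  have hr : ((L / 2 : ℕ) : ℝ) / (((L + 1) / 2 : ℕ) : ℝ) ≤ 1 :=
    div_le_one_of_le₀ (by gcongr; omega) (by positivity)
  calc GSL < _ := lt_mul_div_sub_one_of_lt_mul hGSL hr hL1 hcc
    _ ≤ _ := by
      gcongr
      exact le_csInf (hne.image _) (forall_mem_image.2 hpartial)

/-- Corollary 1: the simpler sufficient condition
`G_SL < (⌊L/2⌋/⌈L/2⌉)·inf_{φ ∈ [0,2π/L)} (1/L)·Σ_{l<L} G_l(φ)` implies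
Condition (C). -/
theorem stmt5
(L : ℕ) (hL : 2 ≤ L)
    (G : ℝ → ℝ) (hGnn : ∀ φ, 0 ≤ G φ)
    (hGper : ∀ φ, G (φ + 2 * Real.pi) = G φ)
    (GSL φB : ℝ) (hGSL : 0 ≤ GSL)
    (hφB0 : 0 < φB) (hφBhalf : φB < Real.pi / 2)
    (hmain : ∀ φ ∈ Set.Ioo (-φB) φB, GSL < G φ)
    (hside : ∀ φ : ℝ, φB ≤ |φ| → |φ| ≤ Real.pi → G φ ≤ GSL)
    (Gl : ℕ → ℝ → ℝ)
    (hGl : ∀ l φ, Gl l φ = G (φ - l * (2 * Real.pi) / L))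
    (hcc : GSL < ((L / 2 : ℕ) : ℝ) / (((L + 1) / 2 : ℕ) : ℝ) *
      sInf ((fun φ => (1 / (L : ℝ)) * ∑ l ∈ Finset.range L, Gl l φ) ''
        Set.Ico (0:ℝ) (2 * Real.pi / L))) :
    GSL < ((L / 2 : ℕ) : ℝ) / (((L + 1) / 2 : ℕ) : ℝ) *
      sInf ((fun φ => (1 / ((L : ℝ) - 1)) * ∑ l ∈ Finset.range (L - 1), Gl l φ) ''
        Set.Icc (φB - 2 * Real.pi / L) (((L : ℝ) - 1) * (2 * Real.pi) / L - φB)) :=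
  stmt5_general L hL G hGnn hGper GSL φB hGSL hφB0 hφBhalf hside Gl hGl hcc
end

section
/- Adopt the directional pattern setup, define n_B = L·φ_B/π − 1, f_N(φ) = Σ_{l=N}^{L−1} G_l(φ), and I_0(N) = [−2π/L + φ_B, N·2π/L − φ_B]. Let N be an integer with 0 ≤ N ≤ L−1 and N ≥ n_B. Then f_N(φ) ≤ (L − N)·G_SL for all φ ∈ I_0(N). -/
/-- Appendix Lemma 5, property (iii): for `0 ≤ N ≤ L−1` with
`N ≥ n_B`, on the interval `I_0(N)` one has `f_N(φ) ≤ (L−N)·G_SL`. -/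
theorem stmt9
(L : ℕ) (hL : 2 ≤ L)
    (G : ℝ → ℝ) (hGnn : ∀ φ, 0 ≤ G φ)
    (hGper : ∀ φ, G (φ + 2 * Real.pi) = G φ)
    (GSL φB : ℝ) (hGSL : 0 ≤ GSL)
    (hφB0 : 0 < φB) (hφBhalf : φB < Real.pi / 2)
    (hmain : ∀ φ ∈ Set.Ioo (-φB) φB, GSL < G φ)
    (hside : ∀ φ : ℝ, φB ≤ |φ| → |φ| ≤ Real.pi → G φ ≤ GSL)
    (Gl : ℕ → ℝ → ℝ)
    (hGl : ∀ l φ, Gl l φ = G (φ - l * (2 * Real.pi) / L))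
(nB : ℝ) (hnB : nB = L * φB / Real.pi - 1)
(f : ℕ → ℝ → ℝ)
    (hf : ∀ N φ, f N φ = ∑ l ∈ Finset.Ico N L, Gl l φ) :
    ∀ N : ℕ, N ≤ L - 1 → nB ≤ (N : ℝ) →
      ∀ φ ∈ Set.Icc (-(2 * Real.pi) / L + φB) ((N : ℝ) * (2 * Real.pi) / L - φB),
        f N φ ≤ ((L : ℝ) - N) * GSL := by
  intro N hN1 hN2 φ hφ
  obtain ⟨hφl, hφr⟩ := hφ
  have hLpos : (0:ℝ) < L := by exact_mod_cast (by omega : 0 < L)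
  have hπ := Real.pi_pos
  have h2L : (0:ℝ) < 2 * Real.pi / L := by positivity
  have key : ∀ l ∈ Finset.Ico N L, Gl l φ ≤ GSL := by
    intro l hl
    rw [Finset.mem_Ico] at hl
    rw [hGl]
    set x := φ - l * (2 * Real.pi) / L with hx
    have hlL : (l:ℝ) + 1 ≤ L := by exact_mod_cast hl.2
    have hNl : (N:ℝ) ≤ l := by exact_mod_cast hl.1
    have e : ∀ a : ℝ, a * (2 * Real.pi) / L = a * (2 * Real.pi / L) := fun a =>
      mul_div_assoc a _ _
    have eL : (L:ℝ) * (2 * Real.pi / L) = 2 * Real.pi := by field_simp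
    have h1 := mul_le_mul_of_nonneg_right hNl h2L.le
    have h2 := mul_le_mul_of_nonneg_right hlL h2L.le
    have hx1 : x ≤ -φB := by rw [hx, e]; rw [e] at hφr; linarith
    have hx2 : -(2 * Real.pi) + φB ≤ x := by
      rw [hx, e]; rw [neg_div] at hφl; rw [eL] at h2; linarith
    by_cases hc : -Real.pi ≤ x
    · apply hside
      · rw [abs_of_nonpos (by linarith : x ≤ 0)]; linarith
      · rw [abs_of_nonpos (by linarith : x ≤ 0)]; linarith
    · rw [← hGper x]
      apply hside
      · rw [abs_of_nonneg (by linarith : (0:ℝ) ≤ x + 2 * Real.pi)]; linarith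
      · rw [abs_of_nonneg (by linarith : (0:ℝ) ≤ x + 2 * Real.pi)]; linarith
  have hNL : N ≤ L := le_trans hN1 (Nat.sub_le L 1)
  rw [hf]
  calc ∑ l ∈ Finset.Ico N L, Gl l φ ≤ ∑ _l ∈ Finset.Ico N L, GSL :=
        Finset.sum_le_sum key
    _ = ((L - N : ℕ) : ℝ) * GSL := by
        rw [Finset.sum_const, Nat.card_Ico, nsmul_eq_mul]
    _ = ((L : ℝ) - N) * GSL := by rw [Nat.cast_sub hNL]
end

section
/- Adopt the directional pattern setup, assume Condition (C), define n_B = L·φ_B/π − 1 and I_0(Q) = [−2π/L + φ_B, Q·2π/L − φ_B]. Let Q be an integer with 0 ≤ Q ≤ L−1 and Q ≥ n_B. Then for all φ ∈ I_0(Q): Σ_{l=0}^{Q−1} G_l(φ) > (⌈L/2⌉/⌊L/2⌋)·Q·G_SL. -/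
set_option maxHeartbeats 1000000 in
/-- Appendix Lemma 5, property (iv): under Condition (C),
for `0 ≤ Q ≤ L−1` with `Q ≥ n_B`, on `I_0(Q)` one has
`Σ_{l<Q} G_l(φ) > (⌈L/2⌉/⌊L/2⌋)·Q·G_SL`. -/
theorem stmt10
(L : ℕ) (hL : 2 ≤ L)
    (G : ℝ → ℝ) (hGnn : ∀ φ, 0 ≤ G φ)
    (hGper : ∀ φ, G (φ + 2 * Real.pi) = G φ)
    (GSL φB : ℝ) (hGSL : 0 ≤ GSL)
    (hφB0 : 0 < φB) (hφBhalf : φB < Real.pi / 2)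
    (hmain : ∀ φ ∈ Set.Ioo (-φB) φB, GSL < G φ)
    (hside : ∀ φ : ℝ, φB ≤ |φ| → |φ| ≤ Real.pi → G φ ≤ GSL)
    (Gl : ℕ → ℝ → ℝ)
    (hGl : ∀ l φ, Gl l φ = G (φ - l * (2 * Real.pi) / L))
(nB : ℝ) (hnB : nB = L * φB / Real.pi - 1)
-- Condition (C)
    (hC : GSL < ((L / 2 : ℕ) : ℝ) / (((L + 1) / 2 : ℕ) : ℝ) *
      sInf ((fun φ => (1 / ((L : ℝ) - 1)) * ∑ l ∈ Finset.range (L - 1), Gl l φ) ''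
        Set.Icc (φB - 2 * Real.pi / L) (((L : ℝ) - 1) * (2 * Real.pi) / L - φB))) :
    ∀ Q : ℕ, Q ≤ L - 1 → nB ≤ (Q : ℝ) →
      ∀ φ ∈ Set.Icc (-(2 * Real.pi) / L + φB) ((Q : ℝ) * (2 * Real.pi) / L - φB),
        (((L + 1) / 2 : ℕ) : ℝ) / ((L / 2 : ℕ) : ℝ) * Q * GSL <
          ∑ l ∈ Finset.range Q, Gl l φ := by
  intro Q hQL hQnB φ hφ
  obtain ⟨hφ1, hφ2⟩ := hφ
  have hπ := Real.pi_pos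
  have hLpos : (0:ℝ) < (L:ℝ) := by exact_mod_cast Nat.lt_of_lt_of_le (by norm_num) hL
  have hL1 : (1:ℝ) < (L:ℝ) := by exact_mod_cast Nat.lt_of_lt_of_le (by norm_num) hL
  set a : ℝ := ((L / 2 : ℕ) : ℝ) with ha_def
  set b : ℝ := (((L + 1) / 2 : ℕ) : ℝ) with hb_def
  have hapos : (0:ℝ) < a := by
    have h1 : (1:ℝ) ≤ a := by rw [ha_def]; exact_mod_cast (by omega : 1 ≤ L / 2)
    linarith
  have hbpos : (0:ℝ) < b := by
    have h1 : (1:ℝ) ≤ b := by rw [hb_def]; exact_mod_cast (by omega : 1 ≤ (L + 1) / 2)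
    linarith
  have hab : a ≤ b := by
    rw [ha_def, hb_def]
    exact_mod_cast (by omega : L / 2 ≤ (L + 1) / 2)
  have hQL' : (Q:ℝ) ≤ (L:ℝ) - 1 := by
    have h : Q + 1 ≤ L := by omega
    have := (Nat.cast_le (α := ℝ)).2 h
    push_cast at this; linarith
  set u : ℝ := 2 * Real.pi / L with hu_def
  have hu : 0 < u := by positivity
  have hLu : (L:ℝ) * u = 2 * Real.pi := by rw [hu_def]; field_simp
  -- sidelobe bound on [φB - 2π, -φB]
  have hside2 : ∀ ψ : ℝ, φB - 2 * Real.pi ≤ ψ → ψ ≤ -φB → G ψ ≤ GSL := by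
    intro ψ h1 h2
    rcases le_or_gt (-Real.pi) ψ with h | h
    · exact hside ψ (by rw [abs_of_nonpos (by linarith)]; linarith)
        (by rw [abs_of_nonpos (by linarith)]; linarith)
    · have hG : G ψ = G (ψ + 2 * Real.pi) := (hGper ψ).symm
      rw [hG]
      exact hside _ (by rw [abs_of_nonneg (by linarith)]; linarith)
        (by rw [abs_of_nonneg (by linarith)]; linarith)
  -- tail terms are in the sidelobe
  have htail : ∀ l ∈ Finset.Ico Q (L - 1), Gl l φ ≤ GSL := by
    intro l hl
    rw [Finset.mem_Ico] at hl
    rw [hGl]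
    have hlu : (l:ℝ) * (2 * Real.pi) / L = (l:ℝ) * u := by rw [hu_def]; ring
    have hl2 : (l:ℝ) ≤ (L:ℝ) - 2 := by
      have h : l + 2 ≤ L := by omega
      have := (Nat.cast_le (α := ℝ)).2 h
      push_cast at this; linarith
    have hQl : (Q:ℝ) ≤ (l:ℝ) := by exact_mod_cast hl.1
    have hm1 : (l:ℝ) * u ≤ ((L:ℝ) - 2) * u := mul_le_mul_of_nonneg_right hl2 hu.le
    have hm2 : (Q:ℝ) * u ≤ (l:ℝ) * u := mul_le_mul_of_nonneg_right hQl hu.le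
    have hφ1' : φB - u ≤ φ := by
      have : -(2 * Real.pi) / L = -u := by rw [hu_def]; ring
      linarith [hφ1, this.symm.le, this.le]
    have hφ2' : φ ≤ (Q:ℝ) * u - φB := by
      have : (Q:ℝ) * (2 * Real.pi) / L = (Q:ℝ) * u := by rw [hu_def]; ring
      linarith [hφ2, this.le, this.symm.le]
    rw [hlu]
    apply hside2
    · nlinarith
    · nlinarith
  -- bound on the tail sum
  have hcard : (((Finset.Ico Q (L - 1)).card : ℕ) : ℝ) = (L:ℝ) - 1 - Q := by
    rw [Nat.card_Ico, Nat.cast_sub hQL, Nat.cast_sub (by omega : 1 ≤ L)]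
    push_cast; ring
  have hsum_tail : ∑ l ∈ Finset.Ico Q (L - 1), Gl l φ ≤ ((L:ℝ) - 1 - Q) * GSL := by
    calc ∑ l ∈ Finset.Ico Q (L - 1), Gl l φ
        ≤ (Finset.Ico Q (L - 1)).card • GSL := Finset.sum_le_card_nsmul _ _ _ htail
      _ = ((L:ℝ) - 1 - Q) * GSL := by rw [nsmul_eq_mul, hcard]
  have hsplit : ∑ l ∈ Finset.range Q, Gl l φ + ∑ l ∈ Finset.Ico Q (L - 1), Gl l φ
      = ∑ l ∈ Finset.range (L - 1), Gl l φ :=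
    Finset.sum_range_add_sum_Ico _ hQL
  set A : ℝ := ∑ l ∈ Finset.range (L - 1), Gl l φ with hA_def
  set SQ : ℝ := ∑ l ∈ Finset.range Q, Gl l φ with hSQ_def
  have htail' : A - SQ ≤ ((L:ℝ) - 1 - Q) * GSL := by linarith
  -- use condition (C) at φ
  have hbdd : BddBelow ((fun φ => (1 / ((L : ℝ) - 1)) * ∑ l ∈ Finset.range (L - 1), Gl l φ) ''
      Set.Icc (φB - 2 * Real.pi / L) (((L : ℝ) - 1) * (2 * Real.pi) / L - φB)) := by
    refine ⟨0, fun x hx => ?_⟩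
    obtain ⟨ψ, _, rfl⟩ := hx
    apply mul_nonneg (div_nonneg zero_le_one (by linarith))
    exact Finset.sum_nonneg fun l _ => by rw [hGl]; exact hGnn _
  have hmem : φ ∈ Set.Icc (φB - 2 * Real.pi / L) (((L : ℝ) - 1) * (2 * Real.pi) / L - φB) := by
    constructor
    · have : -(2 * Real.pi) / L = -(2 * Real.pi / L) := by ring
      linarith [hφ1, this.le]
    · have h1 : (Q:ℝ) * (2 * Real.pi) / L = (Q:ℝ) * u := by rw [hu_def]; ring
      have h2 : ((L:ℝ) - 1) * (2 * Real.pi) / L = ((L:ℝ) - 1) * u := by rw [hu_def]; ring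
      have h3 : (Q:ℝ) * u ≤ ((L:ℝ) - 1) * u := mul_le_mul_of_nonneg_right hQL' hu.le
      linarith
  have hinf_le : sInf ((fun φ => (1 / ((L : ℝ) - 1)) * ∑ l ∈ Finset.range (L - 1), Gl l φ) ''
      Set.Icc (φB - 2 * Real.pi / L) (((L : ℝ) - 1) * (2 * Real.pi) / L - φB))
      ≤ (1 / ((L : ℝ) - 1)) * A :=
    csInf_le hbdd (Set.mem_image_of_mem _ hmem)
  have hGv : GSL < a / b * ((1 / ((L : ℝ) - 1)) * A) :=
    lt_of_lt_of_le hC (mul_le_mul_of_nonneg_left hinf_le (div_nonneg hapos.le hbpos.le))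
  have hkey : GSL * (b * ((L:ℝ) - 1)) < a * A := by
    have h := mul_lt_mul_of_pos_right hGv (show (0:ℝ) < b * ((L:ℝ) - 1) by nlinarith)
    have hrw : a / b * ((1 / ((L : ℝ) - 1)) * A) * (b * ((L:ℝ) - 1)) = a * A := by
      have hb0 : b ≠ 0 := ne_of_gt hbpos
      have hL0 : (L:ℝ) - 1 ≠ 0 := by linarith
      field_simp
    rw [hrw] at h
    exact h
  -- conclude
  rw [div_mul_eq_mul_div, div_mul_eq_mul_div, div_lt_iff₀ hapos]
  have hLQ : (0:ℝ) ≤ (L:ℝ) - 1 - Q := by linarith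
  linarith [mul_le_mul_of_nonneg_left htail' hapos.le,
    mul_nonneg hGSL (mul_nonneg (sub_nonneg.2 hab) hLQ), hkey]
end

section
/- Adopt the directional pattern setup, assume Condition (C), define n_B = L·φ_B/π − 1 and f_N(φ) = Σ_{l=N}^{L−1} G_l(φ). Let N be an integer with 1 ≤ N ≤ L−1. Then f_N(φ) > (L − N)·G_SL for all φ ∈ I_{0,M}^c(N), where I_{0,M}^c(N) = [(N−1)·2π/L + φ_B, 2π − φ_B] when L − N ≥ n_B and I_{0,M}^c(N) = [2π − φ_B, (N−1)·2π/L + φ_B] when L − N < n_B. -/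
/-!
On the first interval, shifting the argument by `N·2π/L` turns the sum in Condition (C) into
`f_N(φ) + Σ_{i<N-1} G_i(φ)`: periodicity wraps the indices `L, …, L+N-2` back to `0, …, N-2`.
Each `G_i(φ)` with `i ≤ N-2` sees `φ` outside its main lobe, so it is at most `G_SL`, and since
`⌊L/2⌋/⌈L/2⌉ ≤ 1`, Condition (C) gives `(L-1)·G_SL < f_N(φ) + (N-1)·G_SL`.
On the second interval every `G_l` with `N ≤ l ≤ L-1` sees `φ` inside its main lobe.
-/

open Real Finset

theorem Function.Periodic.sum_range_sub_one_add {M : Type*} [AddCommMonoid M] {g : ℕ → M}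
    {L N : ℕ} (hg : Function.Periodic g L) (hN : 0 < N) (hNL : N ≤ L) :
    ∑ l ∈ range (L - 1), g (N + l) = ∑ l ∈ Ico N L, g l + ∑ l ∈ range (N - 1), g l := by
  have hwrap : ∑ l ∈ Ico L (N + (L - 1)), g l = ∑ l ∈ range (N - 1), g l := by
    rw [sum_Ico_eq_sum_range, show N + (L - 1) - L = N - 1 by omega]
    exact sum_congr rfl fun l _ => by rw [add_comm, hg]
  rw [← hwrap, sum_Ico_consecutive _ hNL (by omega), sum_Ico_eq_sum_range, Nat.add_sub_cancel_left]

theorem lt_of_lt_mul_csInf_image {α : Type*} {f : α → ℝ} {s : Set α} {a c : ℝ} {x : α}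
    (hc0 : 0 ≤ c) (hc1 : c ≤ 1) (hf : ∀ y ∈ s, 0 ≤ f y) (h : a < c * sInf (f '' s))
    (hx : x ∈ s) : a < f x :=
  have hbdd : BddBelow (f '' s) := ⟨0, by rintro _ ⟨y, hy, rfl⟩; exact hf y hy⟩
  calc a < c * sInf (f '' s) := h
    _ ≤ c * f x := mul_le_mul_of_nonneg_left (csInf_le hbdd (Set.mem_image_of_mem f hx)) hc0
    _ ≤ f x := mul_le_of_le_one_left (hf x hx) hc1

theorem apply_le_of_mem_Icc_sidelobe {G : ℝ → ℝ} {GSL φB u : ℝ}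
    (hG : Function.Periodic G (2 * π)) (hφB : 0 ≤ φB)
    (hside : ∀ φ : ℝ, φB ≤ |φ| → |φ| ≤ π → G φ ≤ GSL) (hu : u ∈ Set.Icc φB (2 * π - φB)) :
    G u ≤ GSL := by
  obtain ⟨hu1, hu2⟩ := hu
  rcases le_total u π with h | h
  · exact hside u (le_abs.2 (Or.inl hu1)) (abs_le.2 ⟨by linarith [pi_pos], h⟩)
  · rw [← hG.sub_eq]
    exact hside _ (le_abs.2 (Or.inr (by linarith))) (abs_le.2 ⟨by linarith, by linarith [pi_pos]⟩)

/-- The paper's `G_l`. -/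
noncomputable def steeredPattern (G : ℝ → ℝ) (L l : ℕ) (φ : ℝ) : ℝ :=
  G (φ - l * (2 * π) / L)

section steeredPattern

variable {G : ℝ → ℝ} {L N : ℕ} {GSL φB φ : ℝ}

theorem steeredPattern_eq_mul_div (l : ℕ) :
    steeredPattern G L l φ = G (φ - l * (2 * π / L)) := by
  rw [steeredPattern, mul_div_assoc]

theorem periodic_steeredPattern (hG : Function.Periodic G (2 * π)) (hL : L ≠ 0) (φ : ℝ) :
    Function.Periodic (fun l => steeredPattern G L l φ) L := by
  intro l
  dsimp only
  rw [steeredPattern, steeredPattern, ← hG.sub_eq (φ - l * (2 * π) / L)]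
  congr 1
  push_cast
  field_simp
  ring

theorem steeredPattern_sub_mul (l : ℕ) :
    steeredPattern G L l (φ - N * (2 * π) / L) = steeredPattern G L (N + l) φ := by
  rw [steeredPattern, steeredPattern]
  congr 1
  push_cast
  ring

theorem mul_lt_sum_range_steeredPattern (hGnn : ∀ φ, 0 ≤ G φ) (hL : 1 < L)
    (hC : GSL < ((L / 2 : ℕ) : ℝ) / (((L + 1) / 2 : ℕ) : ℝ) *
      sInf ((fun φ => (1 / ((L : ℝ) - 1)) * ∑ l ∈ range (L - 1), steeredPattern G L l φ) ''
        Set.Icc (φB - 2 * π / L) (((L : ℝ) - 1) * (2 * π) / L - φB))) :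
    ∀ x ∈ Set.Icc (φB - 2 * π / L) (((L : ℝ) - 1) * (2 * π) / L - φB),
      ((L : ℝ) - 1) * GSL < ∑ l ∈ range (L - 1), steeredPattern G L l x := by
  intro x hx
  have hL1 : (0 : ℝ) < L - 1 := by
    rw [sub_pos]
    exact_mod_cast hL
  have hc1 : ((L / 2 : ℕ) : ℝ) / (((L + 1) / 2 : ℕ) : ℝ) ≤ 1 :=
    div_le_one_of_le₀ (by exact_mod_cast Nat.div_le_div_right L.le_succ) (by positivity)
  have hnn : ∀ y, 0 ≤ (1 / ((L : ℝ) - 1)) * ∑ l ∈ range (L - 1), steeredPattern G L l y :=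
    fun y => mul_nonneg (one_div_nonneg.2 hL1.le) (sum_nonneg fun l _ => hGnn _)
  have h := lt_of_lt_mul_csInf_image (by positivity) hc1 (fun y _ => hnn y) hC hx
  rw [one_div, inv_mul_eq_div, lt_div_iff₀ hL1] at h
  linarith

theorem mul_lt_sum_Ico_steeredPattern_of_sidelobe (hG : Function.Periodic G (2 * π))
    (hφB : 0 ≤ φB) (hside : ∀ φ : ℝ, φB ≤ |φ| → |φ| ≤ π → G φ ≤ GSL)
    (hC : ∀ x ∈ Set.Icc (φB - 2 * π / L) (((L : ℝ) - 1) * (2 * π) / L - φB),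
      ((L : ℝ) - 1) * GSL < ∑ l ∈ range (L - 1), steeredPattern G L l x)
    (hN : 0 < N) (hNL : N < L)
    (hφ : φ ∈ Set.Icc (((N : ℝ) - 1) * (2 * π) / L + φB) (2 * π - φB)) :
    ((L : ℝ) - N) * GSL < ∑ l ∈ Ico N L, steeredPattern G L l φ := by
  obtain ⟨hφ1, hφ2⟩ := hφ
  have hL : (L : ℝ) ≠ 0 := Nat.cast_ne_zero.2 (by omega)
  set t := 2 * π / L with ht
  have ht0 : 0 < t := by positivity
  have hLt : (L : ℝ) * t = 2 * π := mul_div_cancel₀ _ hL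
  have hN1 : (1 : ℝ) ≤ N := by exact_mod_cast hN
  have hNt : t ≤ N * t := le_mul_of_one_le_left ht0.le hN1
  simp only [mul_div_assoc, ← ht] at hφ1 hC
  have hshift := hC (φ - N * t) ⟨by linarith, by linarith⟩
  have hwrap := (periodic_steeredPattern hG (by omega) φ).sum_range_sub_one_add hN hNL.le
  simp only [← steeredPattern_sub_mul (G := G), mul_div_assoc, ← ht] at hwrap
  have hsidelobes : ∑ i ∈ range (N - 1), steeredPattern G L i φ ≤ ((N : ℝ) - 1) * GSL := by
    have hle : ∀ i ∈ range (N - 1), steeredPattern G L i φ ≤ GSL := by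
      intro i hi
      have hiN : (i : ℝ) ≤ N - 1 := by
        rw [le_sub_iff_add_le]
        exact_mod_cast (by have := mem_range.1 hi; omega : i + 1 ≤ N)
      have hit : (i : ℝ) * t ≤ (N - 1) * t := mul_le_mul_of_nonneg_right hiN ht0.le
      rw [steeredPattern_eq_mul_div, ← ht]
      exact apply_le_of_mem_Icc_sidelobe hG hφB hside
        ⟨by linarith, by linarith [mul_nonneg i.cast_nonneg ht0.le]⟩
    simpa [nsmul_eq_mul, Nat.cast_sub hN] using sum_le_card_nsmul _ _ _ hle
  linarith

theorem mul_lt_sum_Ico_steeredPattern_of_mainlobe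
    (hmain : ∀ φ ∈ Set.Ioo (-φB) φB, GSL < G φ) (hNL : N < L)
    (hφ : φ ∈ Set.Icc (2 * π - φB) (((N : ℝ) - 1) * (2 * π) / L + φB)) :
    ((L : ℝ) - N) * GSL < ∑ l ∈ Ico N L, steeredPattern G L l φ := by
  obtain ⟨hφ1, hφ2⟩ := hφ
  have hL : (L : ℝ) ≠ 0 := Nat.cast_ne_zero.2 (by omega)
  set t := 2 * π / L with ht
  have ht0 : 0 < t := by positivity
  have hLt : (L : ℝ) * t = 2 * π := mul_div_cancel₀ _ hL
  simp only [mul_div_assoc, ← ht] at hφ2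
  have hterm : ∀ l ∈ Ico N L, GSL < steeredPattern G L l φ := by
    intro l hl
    obtain ⟨hNl, hlL⟩ := mem_Ico.1 hl
    have hlL' : (l : ℝ) ≤ L - 1 := by
      rw [le_sub_iff_add_le]
      exact_mod_cast hlL
    have hNl' : (N : ℝ) ≤ l := by exact_mod_cast hNl
    have hlt : (l : ℝ) * t ≤ (L - 1) * t := mul_le_mul_of_nonneg_right hlL' ht0.le
    have hNt : (N : ℝ) * t ≤ l * t := mul_le_mul_of_nonneg_right hNl' ht0.le
    rw [steeredPattern_eq_mul_div, ← ht]
    exact hmain _ ⟨by linarith, by linarith⟩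
  calc ((L : ℝ) - N) * GSL = ∑ _l ∈ Ico N L, GSL := by
        rw [sum_const, Nat.card_Ico, nsmul_eq_mul, Nat.cast_sub hNL.le]
    _ < ∑ l ∈ Ico N L, steeredPattern G L l φ := sum_lt_sum_of_nonempty (nonempty_Ico.2 hNL) hterm

end steeredPattern

theorem stmt11_general
(L : ℕ)
    (G : ℝ → ℝ) (hGnn : ∀ φ, 0 ≤ G φ)
    (hGper : ∀ φ, G (φ + 2 * Real.pi) = G φ)
    (GSL φB : ℝ)
    (hφB0 : 0 < φB)
    (hmain : ∀ φ ∈ Set.Ioo (-φB) φB, GSL < G φ)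
    (hside : ∀ φ : ℝ, φB ≤ |φ| → |φ| ≤ Real.pi → G φ ≤ GSL)
    (Gl : ℕ → ℝ → ℝ)
    (hGl : ∀ l φ, Gl l φ = G (φ - l * (2 * Real.pi) / L))
(nB : ℝ)
(f : ℕ → ℝ → ℝ)
    (hf : ∀ N φ, f N φ = ∑ l ∈ Finset.Ico N L, Gl l φ)
-- Condition (C)
    (hC : GSL < ((L / 2 : ℕ) : ℝ) / (((L + 1) / 2 : ℕ) : ℝ) *
      sInf ((fun φ => (1 / ((L : ℝ) - 1)) * ∑ l ∈ Finset.range (L - 1), Gl l φ) ''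
        Set.Icc (φB - 2 * Real.pi / L) (((L : ℝ) - 1) * (2 * Real.pi) / L - φB))) :
    ∀ N : ℕ, 1 ≤ N → N ≤ L - 1 →
      ∀ φ ∈ (if nB ≤ (L : ℝ) - N then
          Set.Icc (((N : ℝ) - 1) * (2 * Real.pi) / L + φB) (2 * Real.pi - φB)
        else
          Set.Icc (2 * Real.pi - φB) (((N : ℝ) - 1) * (2 * Real.pi) / L + φB)),
        ((L : ℝ) - N) * GSL < f N φ := by
  intro N hN1 hNL φ hφ
  obtain rfl : Gl = steeredPattern G L := funext₂ hGl
  rw [hf]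
  split_ifs at hφ
  · exact mul_lt_sum_Ico_steeredPattern_of_sidelobe hGper hφB0.le hside
      (mul_lt_sum_range_steeredPattern hGnn (by omega) hC) hN1 (by omega) hφ
  · exact mul_lt_sum_Ico_steeredPattern_of_mainlobe hmain (by omega) hφ

/-- Appendix Lemma 5, property (v): under Condition (C),
for `1 ≤ N ≤ L−1`, on the middle interval `I_{0,M}^c(N)` one has
`f_N(φ) > (L−N)·G_SL`. -/
theorem stmt11
(L : ℕ) (hL : 2 ≤ L)
    (G : ℝ → ℝ) (hGnn : ∀ φ, 0 ≤ G φ)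
    (hGper : ∀ φ, G (φ + 2 * Real.pi) = G φ)
    (GSL φB : ℝ) (hGSL : 0 ≤ GSL)
    (hφB0 : 0 < φB) (hφBhalf : φB < Real.pi / 2)
    (hmain : ∀ φ ∈ Set.Ioo (-φB) φB, GSL < G φ)
    (hside : ∀ φ : ℝ, φB ≤ |φ| → |φ| ≤ Real.pi → G φ ≤ GSL)
    (Gl : ℕ → ℝ → ℝ)
    (hGl : ∀ l φ, Gl l φ = G (φ - l * (2 * Real.pi) / L))
(nB : ℝ) (hnB : nB = L * φB / Real.pi - 1)
(f : ℕ → ℝ → ℝ)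
    (hf : ∀ N φ, f N φ = ∑ l ∈ Finset.Ico N L, Gl l φ)
-- Condition (C)
    (hC : GSL < ((L / 2 : ℕ) : ℝ) / (((L + 1) / 2 : ℕ) : ℝ) *
      sInf ((fun φ => (1 / ((L : ℝ) - 1)) * ∑ l ∈ Finset.range (L - 1), Gl l φ) ''
        Set.Icc (φB - 2 * Real.pi / L) (((L : ℝ) - 1) * (2 * Real.pi) / L - φB))) :
    ∀ N : ℕ, 1 ≤ N → N ≤ L - 1 →
      ∀ φ ∈ (if nB ≤ (L : ℝ) - N then
          Set.Icc (((N : ℝ) - 1) * (2 * Real.pi) / L + φB) (2 * Real.pi - φB)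
        else
          Set.Icc (2 * Real.pi - φB) (((N : ℝ) - 1) * (2 * Real.pi) / L + φB)),
        ((L : ℝ) - N) * GSL < f N φ :=
  stmt11_general L G hGnn hGper GSL φB hφB0 hmain hside Gl hGl nB f hf hC
end

section
/- Adopt the directional pattern setup, define n_B = L·φ_B/π − 1 and f_N(φ) = Σ_{l=N}^{L−1} G_l(φ), and suppose φ_B > π/L. Let N be an integer with ⌈L/2⌉ ≤ N ≤ L−1. Then f_N(φ) > f_N(φ − 2π/L) for all φ ∈ I_{0,L}^c(N), where I_{0,L}^c(N) = (N·2π/L − φ_B, (N−1)·2π/L + φ_B) when L − N ≥ n_B and I_{0,L}^c(N) = (N·2π/L − φ_B, 2π − φ_B) when L − N < n_B. -/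
set_option maxHeartbeats 1000000


/-- Appendix Lemma 5, property (vi): if `φ_B > π/L`, then
for `⌈L/2⌉ ≤ N ≤ L−1`, on the left interval `I_{0,L}^c(N)` one has
`f_N(φ) > f_N(φ − 2π/L)`. -/
theorem stmt12
(L : ℕ) (hL : 2 ≤ L)
    (G : ℝ → ℝ) (hGnn : ∀ φ, 0 ≤ G φ)
    (hGper : ∀ φ, G (φ + 2 * Real.pi) = G φ)
    (GSL φB : ℝ) (hGSL : 0 ≤ GSL)
    (hφB0 : 0 < φB) (hφBhalf : φB < Real.pi / 2)
    (hmain : ∀ φ ∈ Set.Ioo (-φB) φB, GSL < G φ)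
    (hside : ∀ φ : ℝ, φB ≤ |φ| → |φ| ≤ Real.pi → G φ ≤ GSL)
    (Gl : ℕ → ℝ → ℝ)
    (hGl : ∀ l φ, Gl l φ = G (φ - l * (2 * Real.pi) / L))
(nB : ℝ) (hnB : nB = L * φB / Real.pi - 1)
(f : ℕ → ℝ → ℝ)
    (hf : ∀ N φ, f N φ = ∑ l ∈ Finset.Ico N L, Gl l φ)
    (hφBL : Real.pi / L < φB) :
    ∀ N : ℕ, (L + 1) / 2 ≤ N → N ≤ L - 1 →
      ∀ φ ∈ (if nB ≤ (L : ℝ) - N then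
          Set.Ioo ((N : ℝ) * (2 * Real.pi) / L - φB) (((N : ℝ) - 1) * (2 * Real.pi) / L + φB)
        else
          Set.Ioo ((N : ℝ) * (2 * Real.pi) / L - φB) (2 * Real.pi - φB)),
        f N (φ - 2 * Real.pi / L) < f N φ := by
  intro N hN1 hN2 φ hφ
  have hπ := Real.pi_pos
  have hLpos : (0:ℝ) < L := by positivity
  have hNL : N < L := by omega
  have hN2N : L ≤ 2 * N := by omega
  have hN2R : (L:ℝ) ≤ 2 * N := by exact_mod_cast hN2N
  have hNltR : (N:ℝ) + 1 ≤ L := by exact_mod_cast hNL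
  -- key difference identity
  have e1 : ∀ l : ℕ, Gl l (φ - 2 * Real.pi / ↑L) = Gl (l+1) φ := by
    intro l
    rw [hGl, hGl]
    congr 1
    push_cast
    ring
  have h2 : (∑ l ∈ Finset.Ico N L, Gl l (φ - 2 * Real.pi / ↑L))
      = ∑ l ∈ Finset.Ico (N+1) (L+1), Gl l φ := by
    rw [Finset.sum_Ico_eq_sum_range, Finset.sum_Ico_eq_sum_range]
    simp only [Nat.succ_sub_succ]
    refine Finset.sum_congr rfl fun i _ => ?_
    rw [e1]
    congr 1
    omega
  have hGL : Gl L φ = G φ := by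
    rw [hGl]
    have hx : φ - ↑L * (2 * Real.pi) / ↑L = (φ - 2 * Real.pi) := by
      field_simp
    rw [hx]
    have := hGper (φ - 2 * Real.pi)
    have h' : G φ = G (φ - 2 * Real.pi) := by simpa using this
    exact h'.symm
  have hdiff : f N φ - f N (φ - 2 * Real.pi / ↑L) = G (φ - ↑N * (2 * Real.pi) / ↑L) - G φ := by
    rw [hf, hf, h2]
    rw [Finset.sum_eq_sum_Ico_succ_bot hNL, Finset.sum_Ico_succ_top (by omega : N + 1 ≤ L)]
    rw [hGl N φ] at *
    rw [← hGL]
    ring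
  -- abbreviation
  obtain ⟨a, ha_def⟩ : ∃ a : ℝ, a = 2 * Real.pi / ↑L := ⟨_, rfl⟩
  have ha : 0 < a := by rw [ha_def]; positivity
  have haπ : Real.pi = (L:ℝ) * a / 2 := by
    rw [ha_def]; field_simp
  have hNa : (N:ℝ) * (2 * Real.pi) / L = (N:ℝ) * a := by
    rw [ha_def]; ring
  have hNa1 : ((N:ℝ) - 1) * (2 * Real.pi) / L = ((N:ℝ) - 1) * a := by
    rw [ha_def]; ring
  have h2π : 2 * Real.pi = (L:ℝ) * a := by
    rw [ha_def]; field_simp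
  -- bounds on φ
  have hlow : (N:ℝ) * a - φB < φ := by
    rw [← hNa]
    by_cases hc : nB ≤ (L:ℝ) - N <;> simp only [if_pos, if_neg, hc, if_true, if_false] at hφ <;>
      first
      | exact hφ.1
      | (rw [if_pos hc] at hφ; exact hφ.1)
      | (rw [if_neg hc] at hφ; exact hφ.1)
  have hupper : φ - ↑N * (2 * Real.pi) / ↑L < φB ∧ φ < 2 * Real.pi - φB := by
    rw [hNa, h2π]
    by_cases hc : nB ≤ (L:ℝ) - N
    · rw [if_pos hc] at hφ
      obtain ⟨h1, h2⟩ := hφ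
      rw [hNa1] at h2
      -- from hc : L*φB/π - 1 ≤ L - N, derive 2*φB ≤ (L-N+1)*a
      rw [hnB, sub_le_iff_le_add, div_le_iff₀ hπ] at hc
      have hφB2 : φB ≤ ((L:ℝ) - N + 1) * a / 2 := by
        have hm : (L:ℝ) * φB ≤ (L:ℝ) * (((L:ℝ) - N + 1) * a / 2) := by
          rw [haπ] at hc; nlinarith [hc]
        exact le_of_mul_le_mul_left hm hLpos
      constructor
      · linarith
      · linarith
    · rw [if_neg hc] at hφ
      obtain ⟨h1, h2⟩ := hφ
      rw [h2π] at h2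
      push_neg at hc
      rw [hnB] at hc
      have hc : ((L:ℝ) - N + 1) * Real.pi < ↑L * φB := by
        rw [← lt_div_iff₀ hπ]; linarith
      have hφB2 : ((L:ℝ) - N + 1) * a / 2 < φB := by
        have hm : (L:ℝ) * (((L:ℝ) - N + 1) * a / 2) < (L:ℝ) * φB := by
          rw [haπ] at hc; nlinarith [hc]
        exact lt_of_mul_lt_mul_left hm hLpos.le
      refine ⟨by linarith, by linarith⟩
  -- GSL < G(ψ)
  have hA : GSL < G (φ - ↑N * (2 * Real.pi) / ↑L) := by
    apply hmain
    rw [hNa]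
    constructor
    · linarith [hlow]
    · rw [hNa] at hupper; exact hupper.1
  -- G φ ≤ GSL
  have hπle : Real.pi ≤ (N:ℝ) * a := by
    rw [haπ]
    nlinarith [mul_nonneg (by linarith : (0:ℝ) ≤ 2 * (N:ℝ) - L) ha.le]
  have hφgt : Real.pi - φB < φ := by linarith [hlow]
  have hB : G φ ≤ GSL := by
    by_cases hcase : φ ≤ Real.pi
    · have hpos : (0:ℝ) < φ := by linarith
      have h1 : φB ≤ |φ| := by
        rw [abs_of_pos hpos]; linarith
      exact hside φ h1 (by rw [abs_of_pos hpos]; exact hcase)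
    · push_neg at hcase
      have hGeq : G φ = G (φ - 2 * Real.pi) := by
        have := hGper (φ - 2 * Real.pi)
        simpa using this
      rw [hGeq]
      have habs : |φ - 2 * Real.pi| = 2 * Real.pi - φ := by
        rw [abs_of_nonpos (by linarith)]; ring
      apply hside
      · rw [habs]; linarith [hupper.2]
      · rw [habs]; linarith
  linarith
end

section
/- Adopt the directional pattern setup, define n_B = L·φ_B/π − 1 and f_N(φ) = Σ_{l=N}^{L−1} G_l(φ), and suppose φ_B > π/L. Let N be an integer with ⌈L/2⌉ ≤ N ≤ L−1. Then f_N(φ) > f_N(φ + 2π/L) for all φ ∈ I_{0,R}^c(N), where I_{0,R}^c(N) = (2π − φ_B, (L−1)·2π/L + φ_B) when L − N ≥ n_B and I_{0,R}^c(N) = ((N−1)·2π/L + φ_B, (L−1)·2π/L + φ_B) when L − N < n_B. -/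
/-- Appendix Lemma 5, property (vii): if `φ_B > π/L`, then
for `⌈L/2⌉ ≤ N ≤ L−1`, on the right interval `I_{0,R}^c(N)` one has
`f_N(φ) > f_N(φ + 2π/L)`. -/
theorem stmt13
(L : ℕ) (hL : 2 ≤ L)
    (G : ℝ → ℝ) (hGnn : ∀ φ, 0 ≤ G φ)
    (hGper : ∀ φ, G (φ + 2 * Real.pi) = G φ)
    (GSL φB : ℝ) (hGSL : 0 ≤ GSL)
    (hφB0 : 0 < φB) (hφBhalf : φB < Real.pi / 2)
    (hmain : ∀ φ ∈ Set.Ioo (-φB) φB, GSL < G φ)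
    (hside : ∀ φ : ℝ, φB ≤ |φ| → |φ| ≤ Real.pi → G φ ≤ GSL)
    (Gl : ℕ → ℝ → ℝ)
    (hGl : ∀ l φ, Gl l φ = G (φ - l * (2 * Real.pi) / L))
(nB : ℝ) (hnB : nB = L * φB / Real.pi - 1)
(f : ℕ → ℝ → ℝ)
    (hf : ∀ N φ, f N φ = ∑ l ∈ Finset.Ico N L, Gl l φ)
    (hφBL : Real.pi / L < φB) :
    ∀ N : ℕ, (L + 1) / 2 ≤ N → N ≤ L - 1 →
      ∀ φ ∈ (if nB ≤ (L : ℝ) - N then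
          Set.Ioo (2 * Real.pi - φB) (((L : ℝ) - 1) * (2 * Real.pi) / L + φB)
        else
          Set.Ioo (((N : ℝ) - 1) * (2 * Real.pi) / L + φB)
            (((L : ℝ) - 1) * (2 * Real.pi) / L + φB)),
        f N (φ + 2 * Real.pi / L) < f N φ := by
  intro N hN1 hN2 φ hφ
  have hπ : (0:ℝ) < Real.pi := Real.pi_pos
  have hL0 : (0:ℝ) < L := by
    have : (0:ℕ) < L := by omega
    exact_mod_cast this
  have hLne : (L:ℝ) ≠ 0 := ne_of_gt hL0
  have hNge1 : 1 ≤ N := by omega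
  have hNltL : N < L := by omega
  have h2N : L ≤ 2 * N := by omega
  -- real casts
  have hNleL : (N:ℝ) ≤ (L:ℝ) - 1 := by
    have : (N:ℝ) + 1 ≤ (L:ℝ) := by exact_mod_cast Nat.succ_le_of_lt hNltL
    linarith
  have h2N' : (L:ℝ) ≤ 2 * N := by exact_mod_cast h2N
  -- the key telescoping identity
  have key : f N φ - f N (φ + 2 * Real.pi / L)
      = G (φ - ((L:ℝ) - 1) * (2 * Real.pi) / L)
        - G (φ + 2 * Real.pi / L - (N:ℝ) * (2 * Real.pi) / L) := by
    rw [hf, hf]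
    simp only [hGl]
    rw [Finset.sum_Ico_eq_sum_range, Finset.sum_Ico_eq_sum_range]
    have hKeq : L - N = (L - N - 1) + 1 := by omega
    rw [hKeq, Finset.sum_range_succ, Finset.sum_range_succ']
    have hterm : ∀ i : ℕ, G (φ + 2 * Real.pi / L - (↑(N + (i + 1)) : ℝ) * (2 * Real.pi) / L)
        = G (φ - (↑(N + i) : ℝ) * (2 * Real.pi) / L) := by
      intro i
      congr 1
      push_cast
      field_simp
      ring
    rw [Finset.sum_congr rfl (fun i _ => hterm i)]
    have htop : ((N + (L - N - 1) : ℕ) : ℝ) = (L:ℝ) - 1 := by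
      have h : N + (L - N - 1) = L - 1 := by omega
      rw [h]
      have : ((L - 1 : ℕ) : ℝ) = (L:ℝ) - 1 := by
        have : 1 ≤ L := by omega
        push_cast [this]; ring
      exact this
    rw [htop]
    have hbot : ((N + 0 : ℕ) : ℝ) = (N:ℝ) := by push_cast; ring
    rw [hbot]
    ring
  obtain ⟨t, ht_def⟩ : ∃ t : ℝ, t = 2 * Real.pi / (L:ℝ) := ⟨_, rfl⟩
  have ht0 : 0 < t := by rw [ht_def]; positivity
  have hπt : 2 * Real.pi = (L:ℝ) * t := by
    rw [ht_def]; field_simp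
  obtain ⟨a, ha_def⟩ : ∃ a : ℝ, a = φ - ((L:ℝ) - 1) * (2 * Real.pi) / L := ⟨_, rfl⟩
  obtain ⟨b, hb_def⟩ : ∃ b : ℝ, b = φ + 2 * Real.pi / L - (N:ℝ) * (2 * Real.pi) / L := ⟨_, rfl⟩
  rw [← ha_def, ← hb_def] at key
  have ha' : a = φ - ((L:ℝ) - 1) * t := by rw [ha_def, ht_def]; ring
  have hb' : b = φ + t - (N:ℝ) * t := by rw [hb_def, ht_def]; ring
  -- common fact: 2 φB < N t
  have hC : 2 * φB < (N:ℝ) * t := by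
    have hLt : (L:ℝ) * t ≤ (2 * (N:ℝ)) * t := mul_le_mul_of_nonneg_right h2N' ht0.le
    linarith [hφBhalf, hπt, hLt]
  -- bounds on a and b
  have habounds : (-φB < a ∧ a < φB) ∧ (φB < b ∧ b < 2 * Real.pi - φB) := by
    split_ifs at hφ with hcase
    · -- case nB ≤ L - N : φ ∈ (2π - φB, (L-1)2π/L + φB)
      obtain ⟨h1, h2⟩ := hφ
      rw [hnB] at hcase
      have h2' : φ < ((L:ℝ) - 1) * t + φB := by rw [mul_div_assoc, ← ht_def] at h2; exact h2
      have hc0 : (L:ℝ) * φB / Real.pi ≤ (L:ℝ) - N + 1 := by linarith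
      have hc : (L:ℝ) * φB ≤ ((L:ℝ) - N + 1) * Real.pi := by
        have h := mul_le_mul_of_nonneg_right hc0 (le_of_lt hπ)
        rwa [div_mul_cancel₀ _ (ne_of_gt hπ)] at h
      have hc2 : 2 * ((L:ℝ) * φB) ≤ ((L:ℝ) - N + 1) * ((L:ℝ) * t) := by
        rw [← hπt]; linarith
      have hA : 2 * φB ≤ ((L:ℝ) - (N:ℝ) + 1) * t := by
        have h3 : (2 * φB) * L ≤ (((L:ℝ) - (N:ℝ) + 1) * t) * L := by linear_combination hc2
        exact le_of_mul_le_mul_right h3 hL0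
      refine ⟨⟨?_, ?_⟩, ?_, ?_⟩
      · rw [ha']; linarith [h1, hπt, ht0]
      · rw [ha']; linarith [h2']
      · rw [hb']; linarith [h1, hπt, hA]
      · rw [hb']; linarith [h2', hC, hπt]
    · -- case nB > L - N : φ ∈ ((N-1)2π/L + φB, (L-1)2π/L + φB)
      obtain ⟨h1, h2⟩ := hφ
      rw [hnB] at hcase
      push_neg at hcase
      have h1' : ((N:ℝ) - 1) * t + φB < φ := by rw [mul_div_assoc, ← ht_def] at h1; exact h1
      have h2' : φ < ((L:ℝ) - 1) * t + φB := by rw [mul_div_assoc, ← ht_def] at h2; exact h2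
      have hc0 : (L:ℝ) - N + 1 < (L:ℝ) * φB / Real.pi := by linarith
      have hc : ((L:ℝ) - N + 1) * Real.pi < (L:ℝ) * φB := by
        have h := mul_lt_mul_of_pos_right hc0 hπ
        rwa [div_mul_cancel₀ _ (ne_of_gt hπ)] at h
      have hc2 : ((L:ℝ) - N + 1) * ((L:ℝ) * t) < 2 * ((L:ℝ) * φB) := by
        rw [← hπt]; linarith
      have hB : ((L:ℝ) - (N:ℝ) + 1) * t < 2 * φB := by
        have h3 : (((L:ℝ) - (N:ℝ) + 1) * t) * L < (2 * φB) * L := by linear_combination hc2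
        exact lt_of_mul_lt_mul_right h3 hL0.le
      refine ⟨⟨?_, ?_⟩, ?_, ?_⟩
      · rw [ha']; linarith [h1', hB, ht0]
      · rw [ha']; linarith [h2']
      · rw [hb']; linarith [h1']
      · rw [hb']; linarith [h2', hC, hπt]
  obtain ⟨⟨ha1, ha2⟩, ⟨hb1, hb2⟩⟩ := habounds
  have hGa : GSL < G a := hmain a ⟨ha1, ha2⟩
  have hGb : G b ≤ GSL := by
    rcases le_or_gt b Real.pi with hbp | hbp
    · apply hside b
      · rw [abs_of_pos (lt_trans hφB0 hb1)]
        exact le_of_lt hb1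
      · rw [abs_of_pos (lt_trans hφB0 hb1)]
        exact hbp
    · have hper : G b = G (b - 2 * Real.pi) := by
        have h := hGper (b - 2 * Real.pi)
        rw [sub_add_cancel] at h
        exact h
      rw [hper]
      apply hside (b - 2 * Real.pi)
      · rw [abs_of_nonpos (by linarith)]
        linarith
      · rw [abs_of_nonpos (by linarith)]
        linarith
  have hlt : G b < G a := lt_of_le_of_lt hGb hGa
  linarith [key, hlt]
end

section
/- Adopt the directional pattern setup and assume Condition (C). For an integer L_0 with 1 ≤ L_0 ≤ L−1, define Ḡ(φ, L_0) = (1/L_0)·Σ_{l=0}^{L_0−1} G_l(φ) + (1/(L−L_0))·Σ_{l=L_0}^{L−1} G_l(φ), and define I_0(L_0) = [−2π/L + φ_B, L_0·2π/L − φ_B]. Then for every integer L_0 with L/2 < L_0 ≤ L−1 and L_0 ≠ ⌈L/2⌉, and for every φ ∈ I_0(L_0): Ḡ(φ, ⌈L/2⌉) > Ḡ(φ, L_0). -/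
/-!
At a direction `φ ∈ I_0(L_0)` every beam `l ∈ [L_0, L)` sees `φ` in its sidelobe region (after
reduction modulo `2π`), so the sidelobe group contributes at most `G_SL` per beam. Feeding this
into Condition (C) at `φ` shows that the mean gain of the `L - L_0` sidelobe beams is
below `⌊L/2⌋ / ⌈L/2⌉` times the mean gain of the `L_0` main beams. Passing from `L_0` to the
balanced split `⌈L/2⌉` moves `L_0 - ⌈L/2⌉` beams from the main group to the sidelobe group, and
clearing denominators shows that this ratio bound makes `Ḡ` increase.
-/

open Real Finset

lemma le_sidelobe_of_mem_Icc {G : ℝ → ℝ} {GSL φB : ℝ} (hφB : 0 ≤ φB)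
    (hper : ∀ φ, G (φ + 2 * π) = G φ)
    (hside : ∀ φ : ℝ, φB ≤ |φ| → |φ| ≤ π → G φ ≤ GSL)
    {θ : ℝ} (h₁ : φB - 2 * π ≤ θ) (h₂ : θ ≤ -φB) : G θ ≤ GSL := by
  rcases le_or_gt (-π) θ with h | h
  · exact hside θ (le_abs.mpr (Or.inr (by linarith))) (abs_le.mpr ⟨h, by linarith⟩)
  · rw [← hper θ]
    exact hside _ (le_abs.mpr (Or.inl (by linarith)))
      (abs_le.mpr ⟨by linarith [pi_pos], by linarith⟩)

lemma sum_Ico_le_sidelobe {G : ℝ → ℝ} {GSL φB : ℝ} (hφB : 0 ≤ φB)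
    (hper : ∀ φ, G (φ + 2 * π) = G φ)
    (hside : ∀ φ : ℝ, φB ≤ |φ| → |φ| ≤ π → G φ ≤ GSL)
    {L L0 n : ℕ} (hL0n : L0 ≤ n) (hnL : n ≤ L) {φ : ℝ}
    (hφ : φ ∈ Set.Icc (-(2 * π) / L + φB) (L0 * (2 * π) / L - φB)) :
    ∑ l ∈ Ico L0 n, G (φ - l * (2 * π) / L) ≤ ((n : ℝ) - L0) * GSL := by
  have hbeam : ∀ l ∈ Ico L0 n, G (φ - l * (2 * π) / L) ≤ GSL := by
    intro l hl
    obtain ⟨hL0l, hln⟩ := mem_Ico.mp hl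
    have hL : (0 : ℝ) < L := by exact_mod_cast (hln.trans_le hnL).pos
    have hl1 : (l : ℝ) + 1 ≤ L := by exact_mod_cast hln.trans_le hnL
    have hL0l' : (L0 : ℝ) ≤ l := by exact_mod_cast hL0l
    refine le_sidelobe_of_mem_Icc hφB hper hside ?_ ?_
    · have : (l : ℝ) * (2 * π) / L ≤ 2 * π - 2 * π / L := by
        rw [div_le_iff₀ hL, sub_mul, div_mul_cancel₀ _ hL.ne']; nlinarith [pi_pos]
      have : -(2 * π) / L = -(2 * π / L) := neg_div _ _
      linarith [hφ.1]
    · have : (L0 : ℝ) * (2 * π) / L ≤ l * (2 * π) / L := by gcongr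
      linarith [hφ.2]
  calc ∑ l ∈ Ico L0 n, G (φ - l * (2 * π) / L)
      ≤ #(Ico L0 n) • GSL := sum_le_card_nsmul _ _ _ hbeam
    _ = ((n : ℝ) - L0) * GSL := by rw [Nat.card_Ico, nsmul_eq_mul, Nat.cast_sub hL0n]

lemma Icc_sidelobe_subset {L L0 : ℕ} {φB : ℝ} (h : (L0 : ℝ) ≤ L - 1) :
    Set.Icc (-(2 * π) / L + φB) (L0 * (2 * π) / L - φB) ⊆
      Set.Icc (φB - 2 * π / L) (((L : ℝ) - 1) * (2 * π) / L - φB) :=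
  Set.Icc_subset_Icc (by rw [neg_div]; linarith) (by gcongr)

lemma lt_mul_of_lt_mul_csInf {f : ℝ → ℝ} {s : Set ℝ} {c g x : ℝ} (hc : 0 ≤ c)
    (hf : BddBelow (f '' s)) (hx : x ∈ s) (h : g < c * sInf (f '' s)) : g < c * f x :=
  h.trans_le (mul_le_mul_of_nonneg_left (csInf_le hf (Set.mem_image_of_mem f hx)) hc)

lemma mul_sidelobe_lt_of_condition_C {l m n A B B' g : ℝ} (hg : 0 ≤ g) (hm : 0 < m)
    (hmn : m < n) (hlm : l ≤ 2 * m) (hnl : n + 1 ≤ l)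
    (hB : B ≤ (l - n) * g) (hB' : B' ≤ (l - 1 - n) * g)
    (hC : g < (l - m) / m * (1 / (l - 1) * (A + B'))) :
    m * n * B < (l - n) * (l - m) * A := by
  have hl : 0 < l - 1 := by linarith
  have hC' : m * (l - 1) * g < (l - m) * (A + B') := by
    have : (l - m) / m * (1 / (l - 1) * (A + B')) = (l - m) * (A + B') / (m * (l - 1)) := by
      field_simp
    rwa [this, lt_div_iff₀ (by positivity), mul_comm] at hC
  have hmain : m * n * g < (l - m) * A := by
    nlinarith [mul_le_mul_of_nonneg_left hB' (by linarith : 0 ≤ l - m),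
      mul_nonneg (mul_nonneg (by linarith : 0 ≤ 2 * m - l) (by linarith : 0 ≤ l - 1 - n)) hg]
  nlinarith [mul_le_mul_of_nonneg_left hB (mul_nonneg hm.le (by linarith : 0 ≤ n)),
    mul_lt_mul_of_pos_left hmain (by linarith : 0 < l - n)]

lemma mean_add_mean_lt_of_mul_lt {l m n A₁ A₂ B : ℝ} (hm : 0 < m) (hmn : m < n) (hnl : n < l)
    (hlm : l ≤ 2 * m) (hA₂ : 0 ≤ A₂)
    (h : m * n * B < (l - n) * (l - m) * (A₁ + A₂)) :
    1 / n * (A₁ + A₂) + 1 / (l - n) * B < 1 / m * A₁ + 1 / (l - m) * (A₂ + B) := by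
  have hn : 0 < n := hm.trans hmn
  have hln : 0 < l - n := by linarith
  have hlm' : 0 < l - m := by linarith
  rw [← sub_pos]
  have hid : 1 / m * A₁ + 1 / (l - m) * (A₂ + B) - (1 / n * (A₁ + A₂) + 1 / (l - n) * B) =
      ((n - m) * ((l - n) * (l - m) * (A₁ + A₂) - m * n * B)
        + ((m + n - l) * m - (n - m) * (l - m)) * (l - n) * A₂)
        / (m * n * (l - m) * (l - n)) := by
    field_simp
    ring
  rw [hid]
  have hcoeff : 0 ≤ (m + n - l) * m - (n - m) * (l - m) := by nlinarith
  exact div_pos (add_pos_of_pos_of_nonneg (mul_pos (by linarith) (by linarith))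
    (mul_nonneg (mul_nonneg hcoeff hln.le) hA₂)) (by positivity)

theorem stmt16_general
(L : ℕ)
    (G : ℝ → ℝ) (hGnn : ∀ φ, 0 ≤ G φ)
    (hGper : ∀ φ, G (φ + 2 * Real.pi) = G φ)
    (GSL φB : ℝ) (hGSL : 0 ≤ GSL)
    (hφB0 : 0 < φB)
    (hside : ∀ φ : ℝ, φB ≤ |φ| → |φ| ≤ Real.pi → G φ ≤ GSL)
    (Gl : ℕ → ℝ → ℝ)
    (hGl : ∀ l φ, Gl l φ = G (φ - l * (2 * Real.pi) / L))
-- Condition (C)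
    (hC : GSL < ((L / 2 : ℕ) : ℝ) / (((L + 1) / 2 : ℕ) : ℝ) *
      sInf ((fun φ => (1 / ((L : ℝ) - 1)) * ∑ l ∈ Finset.range (L - 1), Gl l φ) ''
        Set.Icc (φB - 2 * Real.pi / L) (((L : ℝ) - 1) * (2 * Real.pi) / L - φB)))
(Gbar : ℕ → ℝ → ℝ)
    (hGbar : ∀ L0 φ, Gbar L0 φ =
      (1 / (L0 : ℝ)) * ∑ l ∈ Finset.range L0, Gl l φ +
      (1 / ((L : ℝ) - L0)) * ∑ l ∈ Finset.Ico L0 L, Gl l φ) :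
    ∀ L0 : ℕ, (L : ℝ) / 2 < (L0 : ℝ) → L0 ≤ L - 1 → L0 ≠ (L + 1) / 2 →
      ∀ φ ∈ Set.Icc (-(2 * Real.pi) / L + φB) ((L0 : ℝ) * (2 * Real.pi) / L - φB),
        Gbar L0 φ < Gbar ((L + 1) / 2) φ := by
  intro L0 hL0 hL0L hL0M φ hφ
  set M := (L + 1) / 2
  have hML0 : M < L0 := by
    have : L < 2 * L0 := by exact_mod_cast (by linarith : (L : ℝ) < 2 * L0)
    omega
  have hM : (0 : ℝ) < M := by exact_mod_cast (by omega : 0 < M)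
  have hML0' : (M : ℝ) < L0 := by exact_mod_cast hML0
  have hL0L' : (L0 : ℝ) + 1 ≤ L := by exact_mod_cast (by omega : L0 + 1 ≤ L)
  have hLM : (L : ℝ) ≤ 2 * M := by exact_mod_cast (by omega : L ≤ 2 * M)
  have hb : ((L / 2 : ℕ) : ℝ) = L - M := by
    rw [eq_sub_iff_add_eq]; exact_mod_cast (by omega : L / 2 + M = L)
  have hGlnn : ∀ l ψ, 0 ≤ Gl l ψ := fun l ψ => hGl l ψ ▸ hGnn _
  have hsidelobes :
      ∀ n, L0 ≤ n → n ≤ L → ∑ l ∈ Ico L0 n, Gl l φ ≤ ((n : ℝ) - L0) * GSL := by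
    intro n hL0n hnL
    simp only [hGl]
    exact sum_Ico_le_sidelobe hφB0.le hGper hside hL0n hnL hφ
  have hCφ := lt_mul_of_lt_mul_csInf (by positivity)
    ⟨0, by
      rintro _ ⟨ψ, -, rfl⟩
      exact mul_nonneg (one_div_nonneg.mpr (by linarith)) (sum_nonneg fun l _ => hGlnn l ψ)⟩
    (Icc_sidelobe_subset (by linarith) hφ) hC
  rw [hb, ← sum_range_add_sum_Ico _ (by omega : L0 ≤ L - 1)] at hCφ
  have hratio := mul_sidelobe_lt_of_condition_C hGSL hM hML0' hLM hL0L'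
    (hsidelobes L (by omega) le_rfl)
    (by simpa [Nat.cast_sub (by omega : 1 ≤ L)] using hsidelobes (L - 1) hL0L (by omega)) hCφ
  rw [← sum_range_add_sum_Ico _ hML0.le] at hratio
  rw [hGbar, hGbar, ← sum_range_add_sum_Ico _ hML0.le,
    ← sum_Ico_consecutive _ hML0.le (by omega : L0 ≤ L)]
  exact mean_add_mean_lt_of_mul_lt hM hML0' (by linarith) hLM
    (sum_nonneg fun l _ => hGlnn l φ) hratio

/-- key pointwise step of Theorem 2: under Condition (C), for
every group size `L_0` with `L/2 < L_0 ≤ L−1` and `L_0 ≠ ⌈L/2⌉`, and every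
`φ` in the all-sidelobe region `I_0(L_0)`, the balanced grouping strictly
dominates: `Ḡ(φ, ⌈L/2⌉) > Ḡ(φ, L_0)`. -/
theorem stmt16
(L : ℕ) (hL : 2 ≤ L)
    (G : ℝ → ℝ) (hGnn : ∀ φ, 0 ≤ G φ)
    (hGper : ∀ φ, G (φ + 2 * Real.pi) = G φ)
    (GSL φB : ℝ) (hGSL : 0 ≤ GSL)
    (hφB0 : 0 < φB) (hφBhalf : φB < Real.pi / 2)
    (hmain : ∀ φ ∈ Set.Ioo (-φB) φB, GSL < G φ)
    (hside : ∀ φ : ℝ, φB ≤ |φ| → |φ| ≤ Real.pi → G φ ≤ GSL)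
    (Gl : ℕ → ℝ → ℝ)
    (hGl : ∀ l φ, Gl l φ = G (φ - l * (2 * Real.pi) / L))
-- Condition (C)
    (hC : GSL < ((L / 2 : ℕ) : ℝ) / (((L + 1) / 2 : ℕ) : ℝ) *
      sInf ((fun φ => (1 / ((L : ℝ) - 1)) * ∑ l ∈ Finset.range (L - 1), Gl l φ) ''
        Set.Icc (φB - 2 * Real.pi / L) (((L : ℝ) - 1) * (2 * Real.pi) / L - φB)))
(Gbar : ℕ → ℝ → ℝ)
    (hGbar : ∀ L0 φ, Gbar L0 φ =
      (1 / (L0 : ℝ)) * ∑ l ∈ Finset.range L0, Gl l φ +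
      (1 / ((L : ℝ) - L0)) * ∑ l ∈ Finset.Ico L0 L, Gl l φ) :
    ∀ L0 : ℕ, (L : ℝ) / 2 < (L0 : ℝ) → L0 ≤ L - 1 → L0 ≠ (L + 1) / 2 →
      ∀ φ ∈ Set.Icc (-(2 * Real.pi) / L + φB) ((L0 : ℝ) * (2 * Real.pi) / L - φB),
        Gbar L0 φ < Gbar ((L + 1) / 2) φ :=
  stmt16_general L G hGnn hGper GSL φB hGSL hφB0 hside Gl hGl hC Gbar hGbar
end

section
/- Adopt the directional pattern setup and assume Condition (C). For an integer L_0 with 1 ≤ L_0 ≤ L−1, define Ḡ(φ, L_0) = (1/L_0)·Σ_{l=0}^{L_0−1} G_l(φ) + (1/(L−L_0))·Σ_{l=L_0}^{L−1} G_l(φ), and define I_0(L_0) = [−2π/L + φ_B, L_0·2π/L − φ_B]. Then for every integer L_0 with L/2 < L_0 ≤ L−1: inf_{φ ∈ [0, 2π)} Ḡ(φ, ⌈L/2⌉) = inf_{φ ∈ I_0(L_0)} Ḡ(φ, ⌈L/2⌉). -/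
private lemma sum_le_card_mul (g : ℕ → ℝ) (S : ℝ) (a b : ℕ)
    (h : ∀ l, a ≤ l → l < b → g l ≤ S) :
    ∑ l ∈ Finset.Ico a b, g l ≤ ((b - a : ℕ) : ℝ) * S := by
  have := Finset.sum_le_card_nsmul (Finset.Ico a b) g S
    (by intro x hx; rcases Finset.mem_Ico.mp hx with ⟨h1, h2⟩; exact h x h1 h2)
  simpa [Nat.card_Ico, nsmul_eq_mul] using this

private lemma card_mul_le_sum (g : ℕ → ℝ) (S : ℝ) (a b : ℕ)
    (h : ∀ l, a ≤ l → l < b → S ≤ g l) :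
    ((b - a : ℕ) : ℝ) * S ≤ ∑ l ∈ Finset.Ico a b, g l := by
  have := Finset.card_nsmul_le_sum (Finset.Ico a b) g S
    (by intro x hx; rcases Finset.mem_Ico.mp hx with ⟨h1, h2⟩; exact h x h1 h2)
  simpa [Nat.card_Ico, nsmul_eq_mul] using this

private lemma sum_shift_period (g : ℕ → ℝ) (c : ℕ) (hg : ∀ l : ℕ, g (l + c) = g l)
    (n : ℕ) : ∑ l ∈ Finset.Ico c (c + n), g l = ∑ l ∈ Finset.Ico 0 n, g l := by
  rw [Finset.sum_Ico_eq_sum_range, Finset.sum_Ico_eq_sum_range]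
  simp only [Nat.add_sub_cancel_left, Nat.sub_zero, Nat.zero_add]
  exact Finset.sum_congr rfl (fun i _ => by rw [Nat.add_comm c i, hg i])

set_option maxHeartbeats 1000000 in
private lemma odd_core
    (G : ℝ → ℝ) (GSL φB Δ : ℝ) (m : ℕ) (hm : 1 ≤ m)
    (hΔpos : 0 < Δ)
    (hGSL : 0 ≤ GSL) (hφB : 0 < φB) (h2φB : 2*φB ≤ ((m:ℝ)+1)*Δ)
    (hmainG : ∀ x : ℝ, -φB < x → x < φB → GSL < G x)
    (hsideL : ∀ x : ℝ, φB ≤ x → x ≤ (2*(m:ℝ)+1)*Δ - φB → G x ≤ GSL)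
    (hsideR : ∀ x : ℝ, φB - (2*(m:ℝ)+1)*Δ ≤ x → x ≤ -φB → G x ≤ GSL)
    (χ : ℝ)
    (hgper : ∀ l : ℕ, G (χ - ((l + (2*m+1) : ℕ) : ℝ)*Δ) = G (χ - (l:ℝ)*Δ))
    (hstar : φB ≤ χ → χ + φB ≤ (2*(m:ℝ)+1)*Δ →
      2*((m:ℝ)+1)*GSL < ∑ l ∈ Finset.Ico 1 (2*m+1), G (χ - (l:ℝ)*Δ))
    (h1 : ((m:ℝ)+1)*Δ - φB < χ) (h2 : χ < 2*(m:ℝ)*Δ + φB) :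
    ∃ k : ℕ, 1 ≤ k ∧ χ + φB - ((m:ℝ)+1)*Δ ≤ (k:ℝ)*Δ ∧ (k:ℝ)*Δ ≤ χ - φB + Δ ∧
      ∑ l ∈ Finset.Ico 0 k, G (χ - (l:ℝ)*Δ) ≤
        ∑ l ∈ Finset.Ico (m+1) (m+1+k), G (χ - (l:ℝ)*Δ) := by
  set g : ℕ → ℝ := fun l => G (χ - (l:ℝ)*Δ) with hgdef
  have hmR : (1:ℝ) ≤ (m:ℝ) := by exact_mod_cast hm
  have q1 : (2*(m:ℝ)+1)*Δ = 2*((m:ℝ)*Δ) + Δ := by ring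
  have q2 : ((m:ℝ)+1)*Δ = (m:ℝ)*Δ + Δ := by ring
  have q3 : (2*(m:ℝ))*Δ = 2*((m:ℝ)*Δ) := by ring
  have hmΔnn : (0:ℝ) ≤ (m:ℝ)*Δ := by positivity
  have hφχ : φB ≤ χ := by linarith
  have hΔne : Δ ≠ 0 := ne_of_gt hΔpos
  have hmul : ∀ {x y : ℝ}, x ≤ y → x*Δ ≤ y*Δ :=
    fun h => mul_le_mul_of_nonneg_right h hΔpos.le
  rcases le_or_gt (χ + φB) ((2*(m:ℝ)+1)*Δ) with hA | hA
  · -- χ + φB ≤ 2π : cases C1/C2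
    set c : ℕ := ⌈(χ+φB)/Δ⌉₊ with hcdef
    have hx0 : (0:ℝ) ≤ (χ+φB)/Δ := by
      apply div_nonneg _ hΔpos.le; linarith
    have hcl : χ+φB ≤ (c:ℝ)*Δ := by
      rw [← div_le_iff₀ hΔpos]; exact Nat.le_ceil _
    have hcu : (c:ℝ)*Δ < χ+φB+Δ := by
      have h' := Nat.ceil_lt_add_one hx0
      have h'' := mul_lt_mul_of_pos_right h' hΔpos
      rwa [add_mul, div_mul_cancel₀ _ hΔne, one_mul] at h''
    have hck : m+1 < c := by
      rw [hcdef, Nat.lt_ceil, lt_div_iff₀ hΔpos]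
      push_cast
      linarith
    set k : ℕ := c - (m+1) with hkdef
    have hk1 : 1 ≤ k := by omega
    have hcast : (c:ℝ) = (k:ℝ) + (m:ℝ) + 1 := by
      have h' : c = k + (m+1) := by omega
      rw [h']; push_cast; ring
    have hsplit : (c:ℝ)*Δ = (k:ℝ)*Δ + ((m:ℝ)*Δ + Δ) := by rw [hcast]; ring
    have P1 : χ + φB - ((m:ℝ)+1)*Δ ≤ (k:ℝ)*Δ := by linarith
    have P2 : (k:ℝ)*Δ ≤ χ - φB + Δ := by linarith
    have hAle : ∑ l ∈ Finset.Ico 0 k, g l ≤ ((k - 0 : ℕ):ℝ) * GSL := by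
      refine sum_le_card_mul g GSL 0 k ?_
      intro l _ hlk
      have hl1 : ((l:ℝ)+1) ≤ (k:ℝ) := by exact_mod_cast hlk
      have hlΔ : ((l:ℝ))*Δ + Δ ≤ (k:ℝ)*Δ := by
        have := hmul hl1; linarith [this]
      have hlnn : (0:ℝ) ≤ (l:ℝ)*Δ := by positivity
      exact hsideL _ (by linarith) (by linarith)
    rcases lt_or_ge (χ - φB) (((m:ℝ)+1)*Δ) with hB | hB
    · -- C1 : easy case, B all mainlobe
      refine ⟨k, hk1, P1, P2, ?_⟩
      have hBge : ((m+1+k - (m+1) : ℕ):ℝ) * GSL ≤ ∑ l ∈ Finset.Ico (m+1) (m+1+k), g l := by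
        refine card_mul_le_sum g GSL (m+1) (m+1+k) ?_
        intro l hll hlu
        have hll' : ((m:ℝ)+1) ≤ (l:ℝ) := by exact_mod_cast hll
        have hlu' : ((l:ℝ)+1) ≤ (m:ℝ)+1+(k:ℝ) := by
          have : l+1 ≤ m+1+k := hlu
          exact_mod_cast this
        have h1' : ((m:ℝ)+1)*Δ ≤ (l:ℝ)*Δ := hmul hll'
        have h2' : (l:ℝ)*Δ + Δ ≤ ((m:ℝ)+1+(k:ℝ))*Δ := by
          have := hmul hlu'; linarith [this]
        have h3' : ((m:ℝ)+1+(k:ℝ))*Δ = (m:ℝ)*Δ + Δ + (k:ℝ)*Δ := by ring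
        refine (hmainG _ ?_ ?_).le
        · linarith
        · linarith
      have e1 : (k - 0 : ℕ) = k := by omega
      have e2 : (m+1+k - (m+1) : ℕ) = k := by omega
      rw [e1] at hAle; rw [e2] at hBge
      exact le_trans hAle hBge
    · -- C2 : star case
      have hkm : k ≤ m := by
        have hr : (c:ℝ)*Δ < (2*(m:ℝ)+2)*Δ := by
          have : (2*(m:ℝ)+2)*Δ = 2*((m:ℝ)*Δ) + Δ + Δ := by ring
          linarith
        have : (c:ℝ) < 2*(m:ℝ)+2 := lt_of_mul_lt_mul_right (by linarith [hr]) hΔpos.le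
        have hc' : c < 2*m+2 := by exact_mod_cast this
        omega
      have star := hstar hφχ hA
      have d1 : (∑ l ∈ Finset.Ico 1 k, g l) + ∑ l ∈ Finset.Ico k (m+1), g l
          = ∑ l ∈ Finset.Ico 1 (m+1), g l :=
        Finset.sum_Ico_consecutive g (by omega) (by omega)
      have d2 : (∑ l ∈ Finset.Ico 1 (m+1), g l) + ∑ l ∈ Finset.Ico (m+1) (m+1+k), g l
          = ∑ l ∈ Finset.Ico 1 (m+1+k), g l :=
        Finset.sum_Ico_consecutive g (by omega) (by omega)
      have d3 : (∑ l ∈ Finset.Ico 1 (m+1+k), g l) + ∑ l ∈ Finset.Ico (m+1+k) (2*m+1), g l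
          = ∑ l ∈ Finset.Ico 1 (2*m+1), g l :=
        Finset.sum_Ico_consecutive g (by omega) (by omega)
      have b1 : ∑ l ∈ Finset.Ico 1 k, g l ≤ ((k - 1 : ℕ):ℝ) * GSL := by
        refine sum_le_card_mul g GSL 1 k ?_
        intro l _ hlk
        have hl1 : ((l:ℝ)+1) ≤ (k:ℝ) := by exact_mod_cast hlk
        have hlΔ : ((l:ℝ))*Δ + Δ ≤ (k:ℝ)*Δ := by
          have := hmul hl1; linarith [this]
        have hlnn : (0:ℝ) ≤ (l:ℝ)*Δ := by positivity
        exact hsideL _ (by linarith) (by linarith)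
      have b2 : ∑ l ∈ Finset.Ico k (m+1), g l ≤ ((m+1-k : ℕ):ℝ) * GSL := by
        refine sum_le_card_mul g GSL k (m+1) ?_
        intro l _ hlu
        have hlu' : ((l:ℝ)+1) ≤ (m:ℝ)+1 := by exact_mod_cast hlu
        have hlΔ : ((l:ℝ))*Δ ≤ ((m:ℝ))*Δ := hmul (by linarith)
        have hlnn : (0:ℝ) ≤ (l:ℝ)*Δ := by positivity
        exact hsideL _ (by linarith) (by linarith)
      have b3 : ∑ l ∈ Finset.Ico (m+1+k) (2*m+1), g l ≤ ((2*m+1-(m+1+k) : ℕ):ℝ) * GSL := by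
        refine sum_le_card_mul g GSL (m+1+k) (2*m+1) ?_
        intro l hll hlu
        have hll' : ((m:ℝ)+1+(k:ℝ)) ≤ (l:ℝ) := by
          have : m+1+k ≤ l := hll
          exact_mod_cast this
        have hlu' : ((l:ℝ)+1) ≤ 2*(m:ℝ)+1 := by exact_mod_cast hlu
        have hv1 : ((m:ℝ)+1+(k:ℝ))*Δ ≤ (l:ℝ)*Δ := hmul hll'
        have hv1' : ((m:ℝ)+1+(k:ℝ))*Δ = (m:ℝ)*Δ + Δ + (k:ℝ)*Δ := by ring
        have hv2 : (l:ℝ)*Δ ≤ (2*((m:ℝ)*Δ)) := by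
          have := hmul (show (l:ℝ) ≤ 2*(m:ℝ) by linarith)
          linarith [this]
        refine hsideR _ (by linarith) (by linarith)
      have ck1 : ((k-1 : ℕ):ℝ) = (k:ℝ)-1 := by
        have h' : k-1+1 = k := by omega
        have h'' := congrArg (fun n : ℕ => (n:ℝ)) h'
        push_cast at h''; linarith
      have ck2 : ((m+1-k : ℕ):ℝ) = (m:ℝ)+1-(k:ℝ) := by
        have h' : m+1-k+k = m+1 := by omega
        have h'' := congrArg (fun n : ℕ => (n:ℝ)) h'
        push_cast at h''; linarith
      have ck3 : ((2*m+1-(m+1+k) : ℕ):ℝ) = (m:ℝ)-(k:ℝ) := by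
        have h' : 2*m+1-(m+1+k)+(m+1+k) = 2*m+1 := by omega
        have h'' := congrArg (fun n : ℕ => (n:ℝ)) h'
        push_cast at h''; linarith
      have ck0 : ((k-0 : ℕ):ℝ) = (k:ℝ) := by norm_num
      refine ⟨k, hk1, P1, P2, ?_⟩
      rw [ck0] at hAle
      rw [ck1] at b1; rw [ck2] at b2; rw [ck3] at b3
      have r1 : ((k:ℝ)-1)*GSL = (k:ℝ)*GSL - GSL := by ring
      have r2 : ((m:ℝ)+1-(k:ℝ))*GSL = (m:ℝ)*GSL + GSL - (k:ℝ)*GSL := by ring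
      have r3 : ((m:ℝ)-(k:ℝ))*GSL = (m:ℝ)*GSL - (k:ℝ)*GSL := by ring
      have r4 : 2*((m:ℝ)+1)*GSL = 2*((m:ℝ)*GSL) + 2*GSL := by ring
      linarith
  · -- χ + φB > 2π : cases C3/C4
    rcases lt_or_ge (χ - φB) (((m:ℝ)+1)*Δ) with hB | hB
    · -- C3 : k = m+1
      refine ⟨m+1, by omega, ?_, ?_, ?_⟩
      · push_cast; linarith
      · push_cast; linarith
      · have e0 : ∑ l ∈ Finset.Ico 0 (m+1), g l = g 0 + ∑ l ∈ Finset.Ico 1 (m+1), g l := by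
          rw [← Finset.sum_Ico_consecutive g (by omega : 0 ≤ 1) (by omega : 1 ≤ m+1)]
          congr 1
          rw [show Finset.Ico 0 1 = {0} from rfl, Finset.sum_singleton]
        have etop : m+1+(m+1) = (2*m+1)+1 := by omega
        have e1 : ∑ l ∈ Finset.Ico (m+1) (m+1+(m+1)), g l
            = (∑ l ∈ Finset.Ico (m+1) (2*m+1), g l) + g (2*m+1) := by
          rw [etop, Finset.sum_Ico_succ_top (by omega : m+1 ≤ 2*m+1)]
        have e2 : g (2*m+1) = g 0 := by
          show G (χ - ((2*m+1:ℕ):ℝ)*Δ) = G (χ - ((0:ℕ):ℝ)*Δ)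
          push_cast
          simpa using hgper 0
        have bmid : ∑ l ∈ Finset.Ico 1 (m+1), g l ≤ ((m+1-1 : ℕ):ℝ) * GSL := by
          refine sum_le_card_mul g GSL 1 (m+1) ?_
          intro l hll hlu
          have hll' : (1:ℝ) ≤ (l:ℝ) := by exact_mod_cast hll
          have hlu' : ((l:ℝ)+1) ≤ (m:ℝ)+1 := by exact_mod_cast hlu
          have hv1 : (1:ℝ)*Δ ≤ (l:ℝ)*Δ := hmul hll'
          have hv2 : (l:ℝ)*Δ ≤ ((m:ℝ))*Δ := hmul (by linarith)
          refine hsideL _ (by linarith) (by linarith)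
        have bright : ((2*m+1-(m+1) : ℕ):ℝ) * GSL ≤ ∑ l ∈ Finset.Ico (m+1) (2*m+1), g l := by
          refine card_mul_le_sum g GSL (m+1) (2*m+1) ?_
          intro l hll hlu
          have hll' : ((m:ℝ)+1) ≤ (l:ℝ) := by exact_mod_cast hll
          have hlu' : ((l:ℝ)+1) ≤ 2*(m:ℝ)+1 := by exact_mod_cast hlu
          have hv1 : ((m:ℝ)+1)*Δ ≤ (l:ℝ)*Δ := hmul hll'
          have hv2 : (l:ℝ)*Δ ≤ 2*((m:ℝ)*Δ) := by
            have := hmul (show (l:ℝ) ≤ 2*(m:ℝ) by linarith)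
            linarith [this]
          refine (hmainG _ ?_ ?_).le
          · linarith
          · linarith
        have cm1 : ((m+1-1 : ℕ):ℝ) = (m:ℝ) := by
          rw [show m+1-1 = m from by omega]
        have cm2 : ((2*m+1-(m+1) : ℕ):ℝ) = (m:ℝ) := by
          rw [show 2*m+1-(m+1) = m from by omega]
        rw [e0, e1, e2]
        rw [cm1] at bmid; rw [cm2] at bright
        linarith
    · -- C4 : k = ⌊(χ-φB)/Δ⌋₊ + 1
      set f : ℕ := ⌊(χ-φB)/Δ⌋₊ with hfdef
      have hx0 : (0:ℝ) ≤ (χ-φB)/Δ := by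
        apply div_nonneg _ hΔpos.le; linarith
      have hf1 : (f:ℝ)*Δ ≤ χ-φB := by
        have h' := Nat.floor_le hx0
        have := hmul h'
        rwa [div_mul_cancel₀ _ hΔne] at this
      have hf2 : χ-φB < ((f:ℝ)+1)*Δ := by
        have h' := Nat.lt_floor_add_one ((χ-φB)/Δ)
        have h'' := mul_lt_mul_of_pos_right h' hΔpos
        rwa [div_mul_cancel₀ _ hΔne] at h''
      have hf3 : m+1 ≤ f := by
        apply Nat.le_floor
        rw [le_div_iff₀ hΔpos]
        push_cast
        linarith
      set k : ℕ := f + 1 with hkdef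
      have hk1 : 1 ≤ k := by omega
      have hkm2 : m+2 ≤ k := by omega
      have hkcast : (k:ℝ) = (f:ℝ)+1 := by rw [hkdef]; push_cast; ring
      have hk2m : k ≤ 2*m := by
        have hfr : (f:ℝ)*Δ < 2*((m:ℝ)*Δ) := by linarith
        have : (f:ℝ) < 2*(m:ℝ) := lt_of_mul_lt_mul_right (by linarith [hfr]) hΔpos.le
        have hc' : f < 2*m := by exact_mod_cast this
        omega
      have hkΔ : χ-φB < (k:ℝ)*Δ := by rw [hkcast]; exact hf2
      have P2 : (k:ℝ)*Δ ≤ χ - φB + Δ := by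
        have : (k:ℝ)*Δ = (f:ℝ)*Δ + Δ := by rw [hkcast]; ring
        linarith
      have P1 : χ + φB - ((m:ℝ)+1)*Δ ≤ (k:ℝ)*Δ := by linarith
      refine ⟨k, hk1, P1, P2, ?_⟩
      have hgper' : ∀ l : ℕ, g (l + (2*m+1)) = g l := fun l => hgper l
      have dB1 : (∑ l ∈ Finset.Ico (m+1) (2*m+1), g l) + ∑ l ∈ Finset.Ico (2*m+1) (m+1+k), g l
          = ∑ l ∈ Finset.Ico (m+1) (m+1+k), g l :=
        Finset.sum_Ico_consecutive g (by omega) (by omega)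
      have dsh : ∑ l ∈ Finset.Ico (2*m+1) (m+1+k), g l = ∑ l ∈ Finset.Ico 0 (k-m), g l := by
        rw [show m+1+k = (2*m+1) + (k-m) from by omega]
        exact sum_shift_period g (2*m+1) hgper' (k-m)
      have dB2 : (∑ l ∈ Finset.Ico (m+1) k, g l) + ∑ l ∈ Finset.Ico k (2*m+1), g l
          = ∑ l ∈ Finset.Ico (m+1) (2*m+1), g l :=
        Finset.sum_Ico_consecutive g (by omega) (by omega)
      have dA1 : (∑ l ∈ Finset.Ico 0 (k-m), g l) + ∑ l ∈ Finset.Ico (k-m) k, g l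
          = ∑ l ∈ Finset.Ico 0 k, g l :=
        Finset.sum_Ico_consecutive g (by omega) (by omega)
      have dA2 : (∑ l ∈ Finset.Ico (k-m) (m+1), g l) + ∑ l ∈ Finset.Ico (m+1) k, g l
          = ∑ l ∈ Finset.Ico (k-m) k, g l :=
        Finset.sum_Ico_consecutive g (by omega) (by omega)
      have ckm : ((k-m : ℕ):ℝ) = (k:ℝ)-(m:ℝ) := by
        have h' : k-m+m = k := by omega
        have h'' := congrArg (fun n : ℕ => (n:ℝ)) h'
        push_cast at h''; linarith
      have bL : ∑ l ∈ Finset.Ico (k-m) (m+1), g l ≤ ((m+1-(k-m) : ℕ):ℝ) * GSL := by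
        refine sum_le_card_mul g GSL (k-m) (m+1) ?_
        intro l hll hlu
        have hll' : ((k-m:ℕ):ℝ) ≤ (l:ℝ) := by exact_mod_cast hll
        rw [ckm] at hll'
        have hlu' : ((l:ℝ)+1) ≤ (m:ℝ)+1 := by exact_mod_cast hlu
        have hv1 : ((k:ℝ)-(m:ℝ))*Δ ≤ (l:ℝ)*Δ := hmul hll'
        have hv1' : ((k:ℝ)-(m:ℝ))*Δ = (k:ℝ)*Δ - (m:ℝ)*Δ := by ring
        have hv2 : (l:ℝ)*Δ ≤ ((m:ℝ))*Δ := hmul (by linarith)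
        exact hsideL _ (by linarith) (by linarith)
      have bR : ((2*m+1-k : ℕ):ℝ) * GSL ≤ ∑ l ∈ Finset.Ico k (2*m+1), g l := by
        refine card_mul_le_sum g GSL k (2*m+1) ?_
        intro l hll hlu
        have hll' : ((k:ℕ):ℝ) ≤ (l:ℝ) := by exact_mod_cast hll
        have hlu' : ((l:ℝ)+1) ≤ 2*(m:ℝ)+1 := by exact_mod_cast hlu
        have hv1 : (k:ℝ)*Δ ≤ (l:ℝ)*Δ := hmul hll'
        have hv2 : (l:ℝ)*Δ ≤ 2*((m:ℝ)*Δ) := by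
          have := hmul (show (l:ℝ) ≤ 2*(m:ℝ) by linarith)
          linarith [this]
        refine (hmainG _ ?_ ?_).le
        · linarith
        · linarith
      rw [show (m+1-(k-m) : ℕ) = (2*m+1-k : ℕ) from by omega] at bL
      linarith

private lemma sum_arg_shift (g : ℕ → ℝ) (a b k : ℕ) :
    ∑ l ∈ Finset.Ico a b, g (l + k) = ∑ l ∈ Finset.Ico (a + k) (b + k), g l := by
  rw [Finset.sum_Ico_eq_sum_range, Finset.sum_Ico_eq_sum_range]
  rw [show b + k - (a + k) = b - a from by omega]
  exact Finset.sum_congr rfl (fun i _ => by congr 1; omega)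

set_option maxHeartbeats 2000000 in
/-- second step of Theorem 2: under Condition (C), for every
group size `L_0` with `L/2 < L_0 ≤ L−1`, the infimum over `[0,2π)` of the
balanced-grouping equivalent pattern `Ḡ(·, ⌈L/2⌉)` is already attained on
`I_0(L_0)`. -/
theorem stmt17
(L : ℕ) (hL : 2 ≤ L)
    (G : ℝ → ℝ) (hGnn : ∀ φ, 0 ≤ G φ)
    (hGper : ∀ φ, G (φ + 2 * Real.pi) = G φ)
    (GSL φB : ℝ) (hGSL : 0 ≤ GSL)
    (hφB0 : 0 < φB) (hφBhalf : φB < Real.pi / 2)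
    (hmain : ∀ φ ∈ Set.Ioo (-φB) φB, GSL < G φ)
    (hside : ∀ φ : ℝ, φB ≤ |φ| → |φ| ≤ Real.pi → G φ ≤ GSL)
    (Gl : ℕ → ℝ → ℝ)
    (hGl : ∀ l φ, Gl l φ = G (φ - l * (2 * Real.pi) / L))
-- Condition (C)
    (hC : GSL < ((L / 2 : ℕ) : ℝ) / (((L + 1) / 2 : ℕ) : ℝ) *
      sInf ((fun φ => (1 / ((L : ℝ) - 1)) * ∑ l ∈ Finset.range (L - 1), Gl l φ) ''
        Set.Icc (φB - 2 * Real.pi / L) (((L : ℝ) - 1) * (2 * Real.pi) / L - φB)))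
(Gbar : ℕ → ℝ → ℝ)
    (hGbar : ∀ L0 φ, Gbar L0 φ =
      (1 / (L0 : ℝ)) * ∑ l ∈ Finset.range L0, Gl l φ +
      (1 / ((L : ℝ) - L0)) * ∑ l ∈ Finset.Ico L0 L, Gl l φ) :
    ∀ L0 : ℕ, (L : ℝ) / 2 < (L0 : ℝ) → L0 ≤ L - 1 →
      sInf (Gbar ((L + 1) / 2) '' Set.Ico (0:ℝ) (2 * Real.pi)) =
      sInf (Gbar ((L + 1) / 2) ''
        Set.Icc (-(2 * Real.pi) / L + φB) ((L0 : ℝ) * (2 * Real.pi) / L - φB)) := by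
  intro L0 hL0 hL0'
  have hπ := Real.pi_pos
  have hLR : (0:ℝ) < (L:ℝ) := by exact_mod_cast (by omega : 0 < L)
  obtain ⟨Δ, hΔdef⟩ : ∃ Δ : ℝ, Δ = 2 * Real.pi / (L:ℝ) := ⟨_, rfl⟩
  rw [← hΔdef] at hC
  have hΔpos : 0 < Δ := by rw [hΔdef]; positivity
  have hΔne : Δ ≠ 0 := ne_of_gt hΔpos
  have hLΔ : (L:ℝ) * Δ = 2 * Real.pi := by rw [hΔdef]; field_simp
  have hGl' : ∀ (l : ℕ) (x : ℝ), Gl l x = G (x - (l:ℝ) * Δ) := by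
    intro l x; rw [hGl l x]; congr 1; rw [hΔdef]; ring
  have hGper2 : ∀ x, G (x - 2 * Real.pi) = G x := by
    intro x
    have h := hGper (x - 2 * Real.pi)
    rw [sub_add_cancel] at h
    exact h.symm
  have hL2L0 : L < 2 * L0 := by
    have h1 : (L:ℝ) < 2 * (L0:ℝ) := by linarith
    exact_mod_cast h1
  have hNL0 : (L+1)/2 ≤ L0 := by omega
  have hNL0R : (((L+1)/2 : ℕ):ℝ) ≤ (L0:ℝ) := by exact_mod_cast hNL0
  have hL0L : (L0:ℝ) + 1 ≤ (L:ℝ) := by exact_mod_cast (by omega : L0 + 1 ≤ L)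
  have hFnn : ∀ x, 0 ≤ Gbar ((L+1)/2) x := by
    intro x
    rw [hGbar]
    have c1 : (0:ℝ) ≤ 1 / (((L+1)/2 : ℕ):ℝ) := by positivity
    have hle : (((L+1)/2 : ℕ):ℝ) ≤ (L:ℝ) := by exact_mod_cast (by omega : (L+1)/2 ≤ L)
    have c2 : (0:ℝ) ≤ 1 / ((L:ℝ) - (((L+1)/2 : ℕ):ℝ)) := by
      apply one_div_nonneg.mpr; linarith
    have s1 : (0:ℝ) ≤ ∑ l ∈ Finset.range ((L+1)/2), Gl l x :=
      Finset.sum_nonneg fun l _ => by rw [hGl']; exact hGnn _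
    have s2 : (0:ℝ) ≤ ∑ l ∈ Finset.Ico ((L+1)/2) L, Gl l x :=
      Finset.sum_nonneg fun l _ => by rw [hGl']; exact hGnn _
    exact add_nonneg (mul_nonneg c1 s1) (mul_nonneg c2 s2)
  have hFper : ∀ x, Gbar ((L+1)/2) (x + 2*Real.pi) = Gbar ((L+1)/2) x := by
    intro x
    rw [hGbar, hGbar]
    have e1 : ∀ l : ℕ, Gl l (x + 2*Real.pi) = Gl l x := by
      intro l
      rw [hGl', hGl',
        show x + 2*Real.pi - (l:ℝ)*Δ = (x - (l:ℝ)*Δ) + 2*Real.pi from by ring, hGper]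
    rw [Finset.sum_congr rfl fun l _ => e1 l, Finset.sum_congr rfl fun l _ => e1 l]
  have hlo : -(2 * Real.pi) / (L:ℝ) + φB = φB - Δ := by rw [hΔdef]; ring
  have hhi : (L0:ℝ) * (2 * Real.pi) / (L:ℝ) = (L0:ℝ) * Δ := by rw [hΔdef]; ring
  have h2φBπ : 2*φB < Real.pi := by linarith
  -- the key lemma : from any point of a period, reach I0 without increasing Gbar
  have key : ∀ x : ℝ, 0 ≤ x → x < 2 * Real.pi →
      ∃ y, (φB - Δ ≤ y ∧ y ≤ ((((L+1)/2 : ℕ)):ℝ) * Δ - φB) ∧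
        Gbar ((L+1)/2) y ≤ Gbar ((L+1)/2) x := by
    rcases Nat.even_or_odd L with hEv | hOdd
    · -- EVEN CASE
      obtain ⟨n, hn⟩ := hEv
      subst hn
      have hn1 : 1 ≤ n := by omega
      rw [show (n+n+1)/2 = n from by omega] at hFper ⊢
      have hnΔ : ((n:ℝ))*Δ = Real.pi := by
        have h' : ((n+n:ℕ):ℝ) * Δ = 2*Real.pi := hLΔ
        push_cast at h'
        linarith
      intro x hx0 hx2π
      -- total-sum form of Gbar n
      have tot : ∀ z : ℝ, Gbar n z = (1/(n:ℝ)) * ∑ l ∈ Finset.Ico 0 (n+n), G (z - (l:ℝ)*Δ) := by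
        intro z
        rw [hGbar]
        have e1 : ∑ l ∈ Finset.range n, Gl l z = ∑ l ∈ Finset.Ico 0 n, G (z - (l:ℝ)*Δ) := by
          rw [Finset.range_eq_Ico]; exact Finset.sum_congr rfl fun l _ => hGl' l z
        have e2 : ∑ l ∈ Finset.Ico n (n+n), Gl l z = ∑ l ∈ Finset.Ico n (n+n), G (z - (l:ℝ)*Δ) :=
          Finset.sum_congr rfl fun l _ => hGl' l z
        have e3 : ((∑ l ∈ Finset.Ico 0 n, G (z - (l:ℝ)*Δ)) +
            ∑ l ∈ Finset.Ico n (n+n), G (z-(l:ℝ)*Δ))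
            = ∑ l ∈ Finset.Ico 0 (n+n), G (z-(l:ℝ)*Δ) :=
          Finset.sum_Ico_consecutive _ (by omega) (by omega)
        have e4 : ((n+n:ℕ):ℝ) - ((n:ℕ):ℝ) = (n:ℝ) := by push_cast; ring
        rw [e1, e2, e4, ← e3]
        ring
      have hshift : ∀ z : ℝ, Gbar n (z - Δ) = Gbar n z := by
        intro z
        rw [tot, tot]
        congr 1
        have e5 : ∑ l ∈ Finset.Ico 0 (n+n), G (z - Δ - (l:ℝ)*Δ)
            = ∑ l ∈ Finset.Ico 0 (n+n), (fun j : ℕ => G (z - (j:ℝ)*Δ)) (l+1) := by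
          refine Finset.sum_congr rfl fun l _ => ?_
          show G (z - Δ - (l:ℝ)*Δ) = G (z - ((l+1:ℕ):ℝ)*Δ)
          congr 1
          push_cast
          ring
        rw [e5, sum_arg_shift (fun j : ℕ => G (z - (j:ℝ)*Δ)) 0 (n+n) 1]
        have e6 : ∑ l ∈ Finset.Ico (0+1) (n+n+1), G (z-(l:ℝ)*Δ)
            = (∑ l ∈ Finset.Ico 1 (n+n), G (z-(l:ℝ)*Δ)) + G (z - ((n+n:ℕ):ℝ)*Δ) := by
          rw [show (0+1 : ℕ) = 1 from rfl, Finset.sum_Ico_succ_top (by omega : 1 ≤ n+n)]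
        have e7 : ∑ l ∈ Finset.Ico 0 (n+n), G (z-(l:ℝ)*Δ)
            = G (z - ((0:ℕ):ℝ)*Δ) + ∑ l ∈ Finset.Ico 1 (n+n), G (z-(l:ℝ)*Δ) := by
          rw [← Finset.sum_Ico_consecutive _ (by omega : (0:ℕ) ≤ 1) (by omega : 1 ≤ n+n)]
          rw [show Finset.Ico (0:ℕ) 1 = {0} from rfl, Finset.sum_singleton]
        have e8 : G (z - ((n+n:ℕ):ℝ)*Δ) = G (z - ((0:ℕ):ℝ)*Δ) := by
          have harg : z - ((n+n:ℕ):ℝ)*Δ = (z - ((0:ℕ):ℝ)*Δ) - 2*Real.pi := by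
            have h' : ((n+n:ℕ):ℝ) * Δ = 2*Real.pi := hLΔ
            push_cast
            push_cast at h'
            linarith
          rw [harg, hGper2]
        rw [e6, e7, e8]
        ring
      have hshiftk : ∀ (j : ℕ) (z : ℝ), Gbar n (z - (j:ℝ)*Δ) = Gbar n z := by
        intro j
        induction j with
        | zero => intro z; norm_num
        | succ i ih =>
          intro z
          have harg : z - ((i+1:ℕ):ℝ)*Δ = (z - Δ) - (i:ℝ)*Δ := by push_cast; ring
          rw [harg, ih (z - Δ), hshift]
      -- choose the shift
      have hx'φ : 0 ≤ (x + 2*Real.pi - φB)/Δ := by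
        apply div_nonneg _ hΔpos.le
        linarith
      set j : ℕ := ⌈(x + 2*Real.pi - φB)/Δ⌉₊ with hj
      have hj1 : x + 2*Real.pi - φB ≤ (j:ℝ)*Δ := by
        rw [← div_le_iff₀ hΔpos]; exact Nat.le_ceil _
      have hj2 : (j:ℝ)*Δ < x + 2*Real.pi - φB + Δ := by
        have h' := Nat.ceil_lt_add_one hx'φ
        have h'' := mul_lt_mul_of_pos_right h' hΔpos
        rwa [add_mul, div_mul_cancel₀ _ hΔne, one_mul] at h''
      refine ⟨x + 2*Real.pi - (j:ℝ)*Δ, ⟨by linarith, ?_⟩, ?_⟩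
      · have hncast : ((n:ℕ):ℝ)*Δ = (n:ℝ)*Δ := rfl
        rw [hncast, hnΔ]
        linarith
      · have e := hshiftk j (x + 2*Real.pi)
        rw [show x + 2*Real.pi - (j:ℝ)*Δ = (x + 2*Real.pi) - (j:ℝ)*Δ from by ring, e, hFper x]
    · -- ODD CASE
      obtain ⟨m, hm⟩ := hOdd
      subst hm
      have hm1 : 1 ≤ m := by omega
      rw [show (2*m+1+1)/2 = m+1 from by omega] at hFper ⊢
      rw [show (2*m+1)/2 = m from by omega, show (2*m+1+1)/2 = m+1 from by omega,
        show 2*m+1-1 = 2*m from by omega] at hC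
      have hLcast : ((2*m+1:ℕ):ℝ) = 2*(m:ℝ)+1 := by push_cast; ring
      have h2π' : (2*(m:ℝ)+1)*Δ = 2*Real.pi := by rw [← hLΔ, hLcast]
      have q1 : (2*(m:ℝ)+1)*Δ = 2*((m:ℝ)*Δ) + Δ := by ring
      have q2 : ((m:ℝ)+1)*Δ = (m:ℝ)*Δ + Δ := by ring
      have hmΔnn : (0:ℝ) ≤ (m:ℝ)*Δ := by positivity
      have hπm : Real.pi ≤ ((m:ℝ)+1)*Δ := by linarith
      have h2φB : 2*φB ≤ ((m:ℝ)+1)*Δ := by linarith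
      have hsideL : ∀ xx : ℝ, φB ≤ xx → xx ≤ (2*(m:ℝ)+1)*Δ - φB → G xx ≤ GSL := by
        intro xx hx1 hx2
        have h2' : xx ≤ 2*Real.pi - φB := by rw [h2π'] at hx2; exact hx2
        rcases le_or_gt xx Real.pi with hle | hgt
        · exact hside xx (by rw [abs_of_pos (by linarith : (0:ℝ) < xx)]; exact hx1)
            (by rw [abs_of_pos (by linarith : (0:ℝ) < xx)]; exact hle)
        · have hneg : xx - 2*Real.pi < 0 := by linarith
          have habs : |xx - 2*Real.pi| = 2*Real.pi - xx := by rw [abs_of_neg hneg]; ring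
          have h' := hside (xx - 2*Real.pi) (by rw [habs]; linarith) (by rw [habs]; linarith)
          rwa [hGper2] at h'
      have hsideR : ∀ xx : ℝ, φB - (2*(m:ℝ)+1)*Δ ≤ xx → xx ≤ -φB → G xx ≤ GSL := by
        intro xx hx1 hx2
        rw [h2π'] at hx1
        have h' := hsideL (xx + 2*Real.pi) (by linarith) (by rw [h2π']; linarith)
        rwa [hGper xx] at h'
      have hmainG : ∀ xx : ℝ, -φB < xx → xx < φB → GSL < G xx := fun xx a b => hmain xx ⟨a, b⟩
      -- Condition (C) consequence
      have hstar0 : ∀ χ : ℝ, φB ≤ χ → χ + φB ≤ (2*(m:ℝ)+1)*Δ →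
          2*((m:ℝ)+1)*GSL < ∑ l ∈ Finset.Ico 1 (2*m+1), G (χ - (l:ℝ)*Δ) := by
        intro χ hχ1 hχ2
        have hbdd : BddBelow ((fun φ => (1 / (((2*m+1:ℕ):ℝ) - 1)) *
            ∑ l ∈ Finset.range (2*m), Gl l φ) ''
            Set.Icc (φB - Δ) ((((2*m+1:ℕ):ℝ) - 1) * (2 * Real.pi) / ((2*m+1:ℕ):ℝ) - φB)) := by
          refine ⟨0, ?_⟩
          rintro y ⟨z, _, rfl⟩
          have c1 : (0:ℝ) ≤ 1 / (((2*m+1:ℕ):ℝ) - 1) := by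
            apply one_div_nonneg.mpr
            rw [hLcast]; linarith
          exact mul_nonneg c1 (Finset.sum_nonneg fun l _ => by rw [hGl']; exact hGnn _)
        have hupeq : (((2*m+1:ℕ):ℝ) - 1) * (2 * Real.pi) / ((2*m+1:ℕ):ℝ) - φB
            = 2*((m:ℝ)*Δ) - φB := by
          rw [hΔdef, hLcast]
          field_simp
          ring
        have hmemR : χ - Δ ∈ Set.Icc (φB - Δ)
            ((((2*m+1:ℕ):ℝ) - 1) * (2 * Real.pi) / ((2*m+1:ℕ):ℝ) - φB) := by
          constructor
          · linarith
          · rw [hupeq]; linarith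
        have hle : sInf ((fun φ => (1 / (((2*m+1:ℕ):ℝ) - 1)) *
            ∑ l ∈ Finset.range (2*m), Gl l φ) ''
            Set.Icc (φB - Δ) ((((2*m+1:ℕ):ℝ) - 1) * (2 * Real.pi) / ((2*m+1:ℕ):ℝ) - φB))
            ≤ (1 / (((2*m+1:ℕ):ℝ) - 1)) * ∑ l ∈ Finset.range (2*m), Gl l (χ - Δ) :=
          csInf_le hbdd ⟨χ - Δ, hmemR, rfl⟩
        have hmmR : (0:ℝ) < (m:ℝ) := by exact_mod_cast hm1
        have hpos : (0:ℝ) ≤ ((m:ℕ):ℝ) / (((m+1:ℕ)):ℝ) := by positivity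
        have hchain := lt_of_lt_of_le hC (mul_le_mul_of_nonneg_left hle hpos)
        have hsum : ∑ l ∈ Finset.range (2*m), Gl l (χ-Δ)
            = ∑ l ∈ Finset.Ico 1 (2*m+1), G (χ - (l:ℝ)*Δ) := by
          rw [Finset.range_eq_Ico]
          have e1 : ∀ l ∈ Finset.Ico 0 (2*m),
              Gl l (χ-Δ) = (fun j : ℕ => G (χ - (j:ℝ)*Δ)) (l+1) := by
            intro l _
            rw [hGl']
            show G (χ - Δ - (l:ℝ)*Δ) = G (χ - ((l+1:ℕ):ℝ)*Δ)
            congr 1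
            push_cast
            ring
          rw [Finset.sum_congr rfl e1, sum_arg_shift (fun j : ℕ => G (χ - (j:ℝ)*Δ)) 0 (2*m) 1]
        rw [hsum] at hchain
        set W := ∑ l ∈ Finset.Ico 1 (2*m+1), G (χ - (l:ℝ)*Δ) with hW
        have hcoefeq : (((2*m+1:ℕ):ℝ) - 1) = 2*(m:ℝ) := by rw [hLcast]; ring
        rw [hcoefeq] at hchain
        have hm1cast : (((m+1:ℕ)):ℝ) = (m:ℝ)+1 := by push_cast; ring
        rw [hm1cast] at hchain
        have hfin : ((m:ℕ):ℝ)/((m:ℝ)+1) * (1/(2*(m:ℝ)) * W) = W / (2*((m:ℝ)+1)) := by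
          field_simp
        rw [hfin] at hchain
        have h2m1pos : (0:ℝ) < 2*((m:ℝ)+1) := by positivity
        have := (lt_div_iff₀ h2m1pos).mp hchain
        linarith
      -- wrapper around odd_core
      have domain : ∀ χ : ℝ, ((m:ℝ)+1)*Δ - φB < χ → χ < 2*(m:ℝ)*Δ + φB →
          ∃ y, (φB - Δ ≤ y ∧ y ≤ ((m:ℝ)+1)*Δ - φB) ∧ Gbar (m+1) y ≤ Gbar (m+1) χ := by
        intro χ hc1 hc2
        have hgperχ : ∀ l : ℕ, G (χ - ((l + (2*m+1) : ℕ):ℝ)*Δ) = G (χ - (l:ℝ)*Δ) := by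
          intro l
          have harg : χ - ((l + (2*m+1) : ℕ):ℝ)*Δ = (χ - (l:ℝ)*Δ) - 2*Real.pi := by
            push_cast
            linear_combination -h2π'
          rw [harg, hGper2]
        obtain ⟨k, hk1, P1, P2, hAB⟩ := odd_core G GSL φB Δ m hm1 hΔpos hGSL hφB0 h2φB
          hmainG hsideL hsideR χ hgperχ (hstar0 χ) hc1 hc2
        refine ⟨χ - (k:ℝ)*Δ, ⟨by linarith only [P2], by linarith only [P1]⟩, ?_⟩
        have hrw1 : ∑ l ∈ Finset.range (m+1), Gl l (χ - (k:ℝ)*Δ)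
            = ∑ l ∈ Finset.Ico (0+k) ((m+1)+k), G (χ - (l:ℝ)*Δ) := by
          rw [Finset.range_eq_Ico]
          have e : ∀ l ∈ Finset.Ico 0 (m+1),
              Gl l (χ - (k:ℝ)*Δ) = (fun j : ℕ => G (χ - (j:ℝ)*Δ)) (l+k) := by
            intro l _
            rw [hGl']
            show G (χ - (k:ℝ)*Δ - (l:ℝ)*Δ) = G (χ - ((l+k:ℕ):ℝ)*Δ)
            congr 1
            push_cast
            ring
          rw [Finset.sum_congr rfl e, sum_arg_shift (fun j : ℕ => G (χ - (j:ℝ)*Δ)) 0 (m+1) k]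
        have hrw2 : ∑ l ∈ Finset.Ico (m+1) (2*m+1), Gl l (χ - (k:ℝ)*Δ)
            = ∑ l ∈ Finset.Ico ((m+1)+k) ((2*m+1)+k), G (χ - (l:ℝ)*Δ) := by
          have e : ∀ l ∈ Finset.Ico (m+1) (2*m+1),
              Gl l (χ - (k:ℝ)*Δ) = (fun j : ℕ => G (χ - (j:ℝ)*Δ)) (l+k) := by
            intro l _
            rw [hGl']
            show G (χ - (k:ℝ)*Δ - (l:ℝ)*Δ) = G (χ - ((l+k:ℕ):ℝ)*Δ)
            congr 1
            push_cast
            ring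
          rw [Finset.sum_congr rfl e, sum_arg_shift (fun j : ℕ => G (χ - (j:ℝ)*Δ)) (m+1) (2*m+1) k]
        have hrw3 : ∑ l ∈ Finset.range (m+1), Gl l χ
            = ∑ l ∈ Finset.Ico 0 (m+1), G (χ - (l:ℝ)*Δ) := by
          rw [Finset.range_eq_Ico]; exact Finset.sum_congr rfl fun l _ => hGl' l χ
        have hrw4 : ∑ l ∈ Finset.Ico (m+1) (2*m+1), Gl l χ
            = ∑ l ∈ Finset.Ico (m+1) (2*m+1), G (χ - (l:ℝ)*Δ) :=
          Finset.sum_congr rfl fun l _ => hGl' l χ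
        rw [hGbar, hGbar, hrw1, hrw2, hrw3, hrw4]
        have hc1' : ((m+1:ℕ):ℝ) = (m:ℝ)+1 := by push_cast; ring
        have hc2' : ((2*m+1:ℕ):ℝ) - ((m+1:ℕ):ℝ) = (m:ℝ) := by push_cast; ring
        rw [hc2', hc1']
        set g : ℕ → ℝ := fun l => G (χ - (l:ℝ)*Δ) with hgdef
        have hgper' : ∀ l, g (l + (2*m+1)) = g l := fun l => hgperχ l
        have s1 : ((∑ l ∈ Finset.Ico 0 k, g l) + ∑ l ∈ Finset.Ico (0+k) ((m+1)+k), g l)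
            = ∑ l ∈ Finset.Ico 0 ((m+1)+k), g l := by
          rw [show (0+k) = k from by omega]
          exact Finset.sum_Ico_consecutive g (by omega) (by omega)
        have s2 : ((∑ l ∈ Finset.Ico 0 (m+1), g l) + ∑ l ∈ Finset.Ico (m+1) ((m+1)+k), g l)
            = ∑ l ∈ Finset.Ico 0 ((m+1)+k), g l :=
          Finset.sum_Ico_consecutive g (by omega) (by omega)
        have s3 : ((∑ l ∈ Finset.Ico (m+1) ((m+1)+k), g l)
              + ∑ l ∈ Finset.Ico ((m+1)+k) ((2*m+1)+k), g l)
            = ∑ l ∈ Finset.Ico (m+1) ((2*m+1)+k), g l :=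
          Finset.sum_Ico_consecutive g (by omega) (by omega)
        have s4 : ((∑ l ∈ Finset.Ico (m+1) (2*m+1), g l)
              + ∑ l ∈ Finset.Ico (2*m+1) ((2*m+1)+k), g l)
            = ∑ l ∈ Finset.Ico (m+1) ((2*m+1)+k), g l :=
          Finset.sum_Ico_consecutive g (by omega) (by omega)
        have s5 : ∑ l ∈ Finset.Ico (2*m+1) ((2*m+1)+k), g l = ∑ l ∈ Finset.Ico 0 k, g l :=
          sum_shift_period g (2*m+1) hgper' k
        have hABg : ∑ l ∈ Finset.Ico 0 k, g l ≤ ∑ l ∈ Finset.Ico (m+1) ((m+1)+k), g l := by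
          have : m+1+k = (m+1)+k := rfl
          exact hAB
        have hmposR : (0:ℝ) < (m:ℝ) := by exact_mod_cast hm1
        have hcoefle : (1:ℝ)/((m:ℝ)+1) ≤ 1/(m:ℝ) :=
          one_div_le_one_div_of_le hmposR (by linarith)
        have e1 : ∑ l ∈ Finset.Ico (0+k) ((m+1)+k), g l
            = (∑ l ∈ Finset.Ico 0 (m+1), g l) + (∑ l ∈ Finset.Ico (m+1) ((m+1)+k), g l)
              - ∑ l ∈ Finset.Ico 0 k, g l := by linarith only [s1, s2]
        have e2 : ∑ l ∈ Finset.Ico ((m+1)+k) ((2*m+1)+k), g l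
            = (∑ l ∈ Finset.Ico (m+1) (2*m+1), g l) + (∑ l ∈ Finset.Ico 0 k, g l)
              - ∑ l ∈ Finset.Ico (m+1) ((m+1)+k), g l := by linarith only [s3, s4, s5]
        rw [e1, e2]
        have hprod : 0 ≤ ((∑ l ∈ Finset.Ico (m+1) ((m+1)+k), g l) - ∑ l ∈ Finset.Ico 0 k, g l)
            * (1/(m:ℝ) - 1/((m:ℝ)+1)) :=
          mul_nonneg (by linarith only [hABg]) (by linarith only [hcoefle])
        have hkeyeq : (1/((m:ℝ)+1)) * ((∑ l ∈ Finset.Ico 0 (m+1), g l)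
              + (∑ l ∈ Finset.Ico (m+1) ((m+1)+k), g l) - ∑ l ∈ Finset.Ico 0 k, g l)
            + (1/(m:ℝ)) * ((∑ l ∈ Finset.Ico (m+1) (2*m+1), g l)
              + (∑ l ∈ Finset.Ico 0 k, g l) - ∑ l ∈ Finset.Ico (m+1) ((m+1)+k), g l)
            = (1/((m:ℝ)+1)) * (∑ l ∈ Finset.Ico 0 (m+1), g l)
              + (1/(m:ℝ)) * (∑ l ∈ Finset.Ico (m+1) (2*m+1), g l)
              - ((∑ l ∈ Finset.Ico (m+1) ((m+1)+k), g l) - ∑ l ∈ Finset.Ico 0 k, g l)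
                * (1/(m:ℝ) - 1/((m:ℝ)+1)) := by ring
        linarith only [hprod, hkeyeq]
      -- dispatch by position of x
      intro x hx0 hx2π
      have hNcast : ((m+1:ℕ):ℝ) = (m:ℝ)+1 := by push_cast; ring
      rw [hNcast]
      rcases le_or_gt x (((m:ℝ)+1)*Δ - φB) with hc1 | hc1
      · rcases le_or_gt (φB - Δ) x with hc0 | hc0
        · exact ⟨x, ⟨hc0, hc1⟩, le_refl _⟩
        · have hd1 : ((m:ℝ)+1)*Δ - φB < x + 2*Real.pi := by
            linarith only [hx0, hφB0, h2π', hmΔnn, hΔpos]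
          have hd2 : x + 2*Real.pi < 2*(m:ℝ)*Δ + φB := by
            linarith only [hc0, h2π', hΔpos]
          obtain ⟨y, hy, hle⟩ := domain (x + 2*Real.pi) hd1 hd2
          exact ⟨y, hy, by rw [hFper x] at hle; exact hle⟩
      · rcases lt_or_ge x (2*(m:ℝ)*Δ + φB) with hc2 | hc2
        · exact domain x hc1 hc2
        · refine ⟨x - 2*Real.pi,
            ⟨by linarith only [hc2, h2π'], by linarith only [hx2π, hπm, h2φBπ, hφB0]⟩, ?_⟩
          have h' := hFper (x - 2*Real.pi)
          rw [sub_add_cancel] at h'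
          exact le_of_eq h'.symm
  -- (N)Δ ≥ π
  have hNhalf : Real.pi ≤ ((((L+1)/2 : ℕ)):ℝ) * Δ := by
    have h2N : (L:ℝ) ≤ 2 * (((L+1)/2 : ℕ):ℝ) := by
      exact_mod_cast (by omega : L ≤ 2*((L+1)/2))
    have h' := mul_le_mul_of_nonneg_right h2N hΔpos.le
    rw [hLΔ] at h'
    have h'' : (2 * ((((L+1)/2 : ℕ)):ℝ)) * Δ = 2*(((((L+1)/2 : ℕ)):ℝ) * Δ) := by ring
    linarith
  have hmemI : ∀ y : ℝ, φB - Δ ≤ y → y ≤ ((((L+1)/2 : ℕ)):ℝ) * Δ - φB →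
      y ∈ Set.Icc (-(2 * Real.pi) / (L:ℝ) + φB) ((L0:ℝ) * (2 * Real.pi) / (L:ℝ) - φB) := by
    intro y h1 h2
    constructor
    · rw [hlo]; exact h1
    · rw [hhi]
      have h' := mul_le_mul_of_nonneg_right hNL0R hΔpos.le
      linarith
  have bddSA : BddBelow (Gbar ((L + 1) / 2) '' Set.Ico (0:ℝ) (2 * Real.pi)) :=
    ⟨0, by rintro y ⟨x, _, rfl⟩; exact hFnn x⟩
  have bddSB : BddBelow (Gbar ((L + 1) / 2) ''
      Set.Icc (-(2 * Real.pi) / (L:ℝ) + φB) ((L0:ℝ) * (2 * Real.pi) / (L:ℝ) - φB)) :=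
    ⟨0, by rintro y ⟨x, _, rfl⟩; exact hFnn x⟩
  have neSA : (Gbar ((L + 1) / 2) '' Set.Ico (0:ℝ) (2 * Real.pi)).Nonempty :=
    ⟨_, ⟨0, ⟨le_refl 0, by positivity⟩, rfl⟩⟩
  have hlohi : -(2 * Real.pi) / (L:ℝ) + φB ≤ (L0:ℝ) * (2 * Real.pi) / (L:ℝ) - φB := by
    rw [hlo, hhi]
    have h' := mul_le_mul_of_nonneg_right hNL0R hΔpos.le
    linarith
  have neSB : (Gbar ((L + 1) / 2) ''
      Set.Icc (-(2 * Real.pi) / (L:ℝ) + φB) ((L0:ℝ) * (2 * Real.pi) / (L:ℝ) - φB)).Nonempty :=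
    ⟨_, ⟨_, ⟨le_refl _, hlohi⟩, rfl⟩⟩
  apply le_antisymm
  · apply le_csInf neSB
    rintro b ⟨y, hy, rfl⟩
    rcases le_or_gt 0 y with h0 | h0
    · have hy2 : y < 2*Real.pi := by
        rcases hy with ⟨_, hyu⟩
        rw [hhi] at hyu
        have h1' : (L0:ℝ) ≤ (L:ℝ) - 1 := by linarith
        have h2' := mul_le_mul_of_nonneg_right h1' hΔpos.le
        have h3' : ((L:ℝ) - 1)*Δ = (L:ℝ)*Δ - Δ := by ring
        rw [h3', hLΔ] at h2'
        linarith
      exact csInf_le bddSA ⟨y, ⟨h0, hy2⟩, rfl⟩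
    · have hΔle : Δ ≤ 2*Real.pi := by
        rw [hΔdef]
        apply div_le_self (by positivity)
        exact_mod_cast (by omega : 1 ≤ L)
      have hy1 : 0 ≤ y + 2*Real.pi := by
        rcases hy with ⟨hyl, _⟩
        rw [hlo] at hyl
        linarith
      have hy2 : y + 2*Real.pi < 2*Real.pi := by linarith
      rw [← hFper y]
      exact csInf_le bddSA ⟨y + 2*Real.pi, ⟨hy1, hy2⟩, rfl⟩
  · apply le_csInf neSA
    rintro a ⟨x, hx, rfl⟩
    obtain ⟨y, ⟨hy1, hy2⟩, hle⟩ := key x hx.1 hx.2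
    exact le_trans (csInf_le bddSB ⟨y, hmemI y hy1 hy2, rfl⟩) hle
end
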